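/- arXiv:1710.02434 — 8 statements merged into one kernel-verified Lean document; each statement's English description precedes it below -/
import Mathlib

section
/- Let A be a point configuration with columns α_1,…,α_N and B a Gale dual with rows β_1,…,β_N. For every ω ∈ ℂ^{1+n} and every t ∈ ℂ^m, the exponential sum f(w) = Σ_{k=1}^N e^{⟨ω,α_k⟩}·⟨β_k,t⟩·e^{⟨w,α_k⟩} (w ∈ ℂ^{1+n}) has a singular point at w = −ω; that is, f(−ω) = 0 and ∂f/∂w_i(−ω) = 0 for all i = 0,…,n. (Inclusion part of the Horn–Kapranov uniformization: every point Φ(ω;t) = (e^{⟨ω,α_k⟩}(Bt)_k)_{k=1}^N lies in the A-discriminantal set of exponential sums possessing a singular point.) -/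
open Matrix Finset

/-- **Horn–Kapranov uniformization (inclusion part) for exponential sums.**
Let `A` be a point configuration (a real `(1+n) × N` matrix, `N = 1+n+m`, of rank `1+n`
with the all-ones vector in its row span) and let `B` be a Gale dual of `A` (of rank `m`
with `A * B = 0`).  For every `ω ∈ ℂ^{1+n}` and `t ∈ ℂ^m`, the exponential sum
`f(w) = Σ_k e^{⟨ω,α_k⟩} ⟨β_k,t⟩ e^{⟨w,α_k⟩}` has a singular point at `w = -ω`:
`f(-ω) = 0` and all partial derivatives `∂f/∂w_i(-ω) = 0`. -/
theorem horn_kapranov_singular_point {n m : ℕ}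
    (A : Matrix (Fin (n + 1)) (Fin (n + 1 + m)) ℝ)
    (B : Matrix (Fin (n + 1 + m)) (Fin m) ℝ)
    (hArank : A.rank = n + 1)
    (hones : ∃ ξ : Fin (n + 1) → ℝ, ∀ k, ∑ i, ξ i * A i k = 1)
    (hBrank : B.rank = m) (hAB : A * B = 0)
    (ω : Fin (n + 1) → ℂ) (t : Fin m → ℂ)
    (f : (Fin (n + 1) → ℂ) → ℂ)
    (hf : f = fun w => ∑ k, Complex.exp (∑ i, ω i * (A i k : ℂ)) *
      (∑ l, (B k l : ℂ) * t l) * Complex.exp (∑ i, w i * (A i k : ℂ))) :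
    f (fun i => -ω i) = 0 ∧
      ∀ i : Fin (n + 1),
        HasDerivAt (fun s : ℂ => f (Function.update (fun j => -ω j) i s)) 0 (-ω i) := by
  obtain ⟨ξ, hξ⟩ := hones
  -- ∑_k A i k * B k l = 0 (complex)
  have hABC : ∀ i l, ∑ k, (A i k : ℂ) * (B k l : ℂ) = 0 := by
    intro i l
    have h0 : ∑ k, A i k * B k l = 0 := by
      simpa [Matrix.mul_apply] using congrFun (congrFun hAB i) l
    exact_mod_cast h0
  -- column sums of B vanish
  have hColB : ∀ l, ∑ k, (B k l : ℂ) = 0 := by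
    intro l
    have hR : ∑ k, B k l = 0 := by
      have : ∑ k, B k l = ∑ k, (∑ i, ξ i * A i k) * B k l := by
        simp [hξ]
      rw [this]
      simp_rw [Finset.sum_mul, mul_assoc]
      rw [Finset.sum_comm]
      have h0 : ∀ i, ∑ k, A i k * B k l = 0 := by
        intro i
        have := congrFun (congrFun hAB i) l
        rwa [Matrix.mul_apply] at this
      simp [← Finset.mul_sum, h0]
    exact_mod_cast hR
  -- sum of the coefficients ⟨β_k, t⟩ vanishes
  have hc0 : ∑ k, (∑ l, (B k l : ℂ) * t l) = 0 := by
    rw [Finset.sum_comm]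
    simp [← Finset.sum_mul, hColB]
  have hexpcancel : ∀ k, Complex.exp (∑ i, ω i * (A i k : ℂ)) *
      Complex.exp (∑ i, (-ω i) * (A i k : ℂ)) = 1 := by
    intro k
    rw [← Complex.exp_add]
    simp [← Finset.sum_add_distrib, neg_mul]
  constructor
  · rw [hf]
    calc (∑ k, Complex.exp (∑ i, ω i * (A i k : ℂ)) *
          (∑ l, (B k l : ℂ) * t l) * Complex.exp (∑ i, (-ω i) * (A i k : ℂ)))
        = ∑ k, (∑ l, (B k l : ℂ) * t l) := by
          refine Finset.sum_congr rfl fun k _ => ?_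
          rw [mul_right_comm, hexpcancel k, one_mul]
      _ = 0 := hc0
  · intro i
    -- rewrite each exponent as an affine function of s
    have hupd : ∀ k (s : ℂ), (∑ j, Function.update (fun j => -ω j) i s j * (A j k : ℂ))
        = s * (A i k : ℂ) + ∑ j ∈ Finset.univ.erase i, (-ω j) * (A j k : ℂ) := by
      intro k s
      have : (fun j => Function.update (fun j => -ω j) i s j * (A j k : ℂ))
          = Function.update (fun j => (-ω j) * (A j k : ℂ)) i (s * (A i k : ℂ)) := by
        funext j
        by_cases hj : j = i
        · subst hj; simp
        · simp [Function.update_of_ne hj]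
      rw [this, Finset.sum_update_of_mem (Finset.mem_univ i)]
      simp [Finset.sdiff_singleton_eq_erase]
    have hd : ∀ k, HasDerivAt (fun s : ℂ => Complex.exp (∑ i, ω i * (A i k : ℂ)) *
        (∑ l, (B k l : ℂ) * t l) *
        Complex.exp (∑ j, Function.update (fun j => -ω j) i s j * (A j k : ℂ)))
        (Complex.exp (∑ i, ω i * (A i k : ℂ)) * (∑ l, (B k l : ℂ) * t l) *
          (Complex.exp (∑ j, (-ω j) * (A j k : ℂ)) * (A i k : ℂ))) (-ω i) := by
      intro k
      have h1 : HasDerivAt (fun s : ℂ => Complex.exp (s * (A i k : ℂ) +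
          ∑ j ∈ Finset.univ.erase i, (-ω j) * (A j k : ℂ)))
          (Complex.exp ((-ω i) * (A i k : ℂ) +
            ∑ j ∈ Finset.univ.erase i, (-ω j) * (A j k : ℂ)) * (A i k : ℂ)) (-ω i) := by
        have := (((hasDerivAt_id (-ω i)).mul_const ((A i k : ℂ))).add_const
          (∑ j ∈ Finset.univ.erase i, (-ω j) * (A j k : ℂ))).cexp
        simpa using this
      have h2 := h1.const_mul (Complex.exp (∑ i, ω i * (A i k : ℂ)) * (∑ l, (B k l : ℂ) * t l))
      have hsum : (-ω i) * (A i k : ℂ) + ∑ j ∈ Finset.univ.erase i, (-ω j) * (A j k : ℂ)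
          = ∑ j, (-ω j) * (A j k : ℂ) := by
        rw [Finset.add_sum_erase _ (fun j => (-ω j) * (A j k : ℂ)) (Finset.mem_univ i)]
      simp only [hsum] at h2
      simpa only [hupd k] using h2
    have hD := HasDerivAt.sum (u := Finset.univ) (fun k _ => hd k)
    have hzero : (∑ k, Complex.exp (∑ i, ω i * (A i k : ℂ)) * (∑ l, (B k l : ℂ) * t l) *
        (Complex.exp (∑ j, (-ω j) * (A j k : ℂ)) * (A i k : ℂ))) = 0 := by
      have : ∀ k, Complex.exp (∑ i, ω i * (A i k : ℂ)) * (∑ l, (B k l : ℂ) * t l) *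
          (Complex.exp (∑ j, (-ω j) * (A j k : ℂ)) * (A i k : ℂ))
          = (A i k : ℂ) * (∑ l, (B k l : ℂ) * t l) := by
        intro k
        rw [show Complex.exp (∑ i, ω i * (A i k : ℂ)) * (∑ l, (B k l : ℂ) * t l) *
            (Complex.exp (∑ j, (-ω j) * (A j k : ℂ)) * (A i k : ℂ))
            = (Complex.exp (∑ i, ω i * (A i k : ℂ)) *
              Complex.exp (∑ j, (-ω j) * (A j k : ℂ))) *
              ((A i k : ℂ) * (∑ l, (B k l : ℂ) * t l)) by ring, hexpcancel k, one_mul]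
      rw [Finset.sum_congr rfl fun k _ => this k]
      simp_rw [Finset.mul_sum]
      rw [Finset.sum_comm]
      refine Finset.sum_eq_zero fun l _ => ?_
      simp_rw [show ∀ k, (A i k : ℂ) * ((B k l : ℂ) * t l) = (A i k : ℂ) * (B k l : ℂ) * t l
        by intro k; ring]
      rw [← Finset.sum_mul, hABC i l, zero_mul]
    rw [hzero] at hD
    rw [hf]
    rw [Finset.sum_fn] at hD
    exact hD
end

section
/- Let A be a point configuration with first row the all-ones vector, Â the matrix of its remaining n rows, and B a Gale dual. For ω ∈ ℂ^{1+n} and t ∈ ℂ^m, let J(ω;t) be the (n+m)×N complex matrix whose (i,k) entry for 1 ≤ i ≤ n is Â_{ik}·⟨β_k,t⟩·e^{⟨ω,α_k⟩} and whose (n+j,k) entry for 1 ≤ j ≤ m is β_{kj}·e^{⟨ω,α_k⟩}. Then for every ω ∈ ℂ^{1+n} and every t ∈ ℂ^m with ⟨β_k,t⟩ ≠ 0 for all k, the matrix J(ω;t) has rank at most n+m−1 if and only if P_A(t) = 0. (Equivalently: the point Φ(ω;t) of the Horn–Kapranov parametrization is a cusp of the A-discriminant variety exactly when the cuspidal form vanishes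 at t.) -/
open Matrix MvPolynomial Finset

/-- Squared maximal minor of `Ahat` on the column set `s` (independent of column order). -/
noncomputable def detSq {rho kappa : Type*} [Fintype rho] [Fintype kappa] [DecidableEq kappa]
    (Ahat : Matrix rho kappa ℝ) (s : Finset kappa) (h : s.card = Fintype.card rho) : ℝ :=
  (Ahat.submatrix (Fintype.equivFin rho).symm
      fun i => ((s.equivFin.symm (Fin.cast h.symm i)) : kappa)).det ^ 2

/-- The cuspidal form `P_A(t) = Σ_{#σ = n} det(Â_σ)² ∏_{k∈σ} ⟨β_k, t⟩`, as a
multivariate polynomial in the variables `t`. -/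
noncomputable def cuspFormPoly {rho kappa mu : Type*}
    [Fintype rho] [Fintype kappa] [Fintype mu] [DecidableEq kappa]
    (Ahat : Matrix rho kappa ℝ) (B : Matrix kappa mu ℝ) : MvPolynomial mu ℝ :=
  ∑ s ∈ (univ.powersetCard (Fintype.card rho)).attach,
    C (detSq Ahat s.1 (mem_powersetCard.mp s.2).2) *
      ∏ k ∈ s.1, ∑ l, C (B k l) * X l

/-- `B` is a Gale dual of `A`: it has full column rank and `A * B = 0`. -/
def IsGaleDual {rho kappa mu : Type*} [Fintype rho] [Fintype kappa] [Fintype mu]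
    (A : Matrix rho kappa ℝ) (B : Matrix kappa mu ℝ) : Prop :=
  B.rank = Fintype.card mu ∧ A * B = 0

/-- `A` is a pyramid: all columns but one span a subspace of dimension at most
(number of rows minus one). -/
def IsPyramid {rho kappa : Type*} [Fintype rho] (A : Matrix rho kappa ℝ) : Prop :=
  ∃ j : kappa, Module.finrank ℝ
      (Submodule.span ℝ ((fun k => fun i => A i k) '' {k | k ≠ j})) ≤ Fintype.card rho - 1


section CB
open Equiv Module
variable {R : Type*} [CommRing R] {n : ℕ} {κ : Type*} [Fintype κ] [DecidableEq κ]

local notation "ε" σ => ((Equiv.Perm.sign σ : ℤ) : R)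

theorem my_det_mul_aux {X : Matrix (Fin n) κ R} {Y : Matrix κ (Fin n) R} {p : Fin n → κ}
    (H : ¬Function.Injective p) :
    (∑ σ : Perm (Fin n), (ε σ) * ∏ x, X (σ x) (p x) * Y (p x) x) = 0 := by
  obtain ⟨i, j, hpij, hij⟩ : ∃ i j, p i = p j ∧ i ≠ j := by
    rw [Function.Injective] at H
    push_neg at H
    obtain ⟨i, j, h1, h2⟩ := H
    exact ⟨i, j, h1, h2⟩
  exact
    sum_involution (fun σ _ => σ * Equiv.swap i j)
      (fun σ _ => by
        have : (∏ x, X (σ x) (p x)) = ∏ x, X ((σ * Equiv.swap i j) x) (p x) :=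
          Fintype.prod_equiv (Equiv.swap i j) _ _ (by simp [Equiv.apply_swap_eq_self hpij])
        simp [this, Perm.sign_swap hij, -Perm.sign_swap', prod_mul_distrib])
      (fun σ _ _ => (not_congr Equiv.mul_swap_eq_iff).mpr hij) (fun _ _ => mem_univ _)
      fun σ _ => Equiv.mul_swap_involutive i j σ

theorem my_det_expand (X : Matrix (Fin n) κ R) (Y : Matrix κ (Fin n) R) :
    det (X * Y) = ∑ p : Fin n → κ, ∑ σ : Perm (Fin n),
      (ε σ) * ∏ i, X (σ i) (p i) * Y (p i) i := by
  simp only [det_apply', mul_apply, prod_univ_sum, mul_sum, Fintype.piFinset_univ]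
  rw [Finset.sum_comm]

/-- The canonical enumeration of a finset of cardinality `n`. -/
noncomputable def enumOf (s : Finset κ) (h : s.card = n) : Fin n → κ :=
  fun i => ((s.equivFin.symm (Fin.cast h.symm i)) : κ)

theorem enumOf_injective (s : Finset κ) (h : s.card = n) :
    Function.Injective (enumOf s h) := by
  intro a b hab
  have := Subtype.coe_injective hab
  simpa using congrArg (Fin.cast h) (s.equivFin.symm.injective this)

theorem enumOf_mem (s : Finset κ) (h : s.card = n) (i : Fin n) : enumOf s h i ∈ s :=
  (s.equivFin.symm (Fin.cast h.symm i)).2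

theorem enumOf_image (s : Finset κ) (h : s.card = n) :
    Finset.image (enumOf s h) univ = s := by
  apply Finset.eq_of_subset_of_card_le
  · intro x hx
    simp only [Finset.mem_image] at hx
    obtain ⟨i, _, rfl⟩ := hx
    exact enumOf_mem s h i
  · rw [Finset.card_image_of_injective _ (enumOf_injective s h), card_univ, Fintype.card_fin, h]

theorem my_cauchy_binet (X : Matrix (Fin n) κ R) (Y : Matrix κ (Fin n) R) :
    det (X * Y) = ∑ s ∈ (univ.powersetCard n : Finset (Finset κ)).attach,
      det (X.submatrix id (enumOf s.1 (mem_powersetCard.mp s.2).2)) *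
        det (Y.submatrix (enumOf s.1 (mem_powersetCard.mp s.2).2) id) := by
  classical
  calc
    det (X * Y) = ∑ p : Fin n → κ, ∑ σ : Perm (Fin n),
        (ε σ) * ∏ i, X (σ i) (p i) * Y (p i) i := my_det_expand X Y
    _ = ∑ p ∈ univ.filter (fun p : Fin n → κ => Function.Injective p), ∑ σ : Perm (Fin n),
        (ε σ) * ∏ i, X (σ i) (p i) * Y (p i) i := by
      refine (Finset.sum_subset (filter_subset _ _) fun p _ hp => ?_).symm
      exact my_det_mul_aux (by simpa using hp)
    _ = ∑ s ∈ (univ.powersetCard n : Finset (Finset κ)), ∑ p ∈ (univ.filter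
          (fun p : Fin n → κ => Function.Injective p)).filter
          (fun p => Finset.image p univ = s), ∑ σ : Perm (Fin n),
        (ε σ) * ∏ i, X (σ i) (p i) * Y (p i) i := by
      refine (Finset.sum_fiberwise_of_maps_to (fun p hp => ?_) _).symm
      simp only [mem_filter, mem_univ, true_and] at hp
      rw [mem_powersetCard]
      exact ⟨Finset.subset_univ _, by
        rw [Finset.card_image_of_injective _ hp, card_univ, Fintype.card_fin]⟩
    _ = ∑ s ∈ (univ.powersetCard n : Finset (Finset κ)).attach, ∑ p ∈ (univ.filter
          (fun p : Fin n → κ => Function.Injective p)).filter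
          (fun p => Finset.image p univ = s.1), ∑ σ : Perm (Fin n),
        (ε σ) * ∏ i, X (σ i) (p i) * Y (p i) i := (Finset.sum_attach _ _).symm
    _ = _ := by
      refine Finset.sum_congr rfl fun s _ => ?_
      obtain ⟨s, hs⟩ := s
      have h : s.card = n := (mem_powersetCard.mp hs).2
      set e := enumOf s h with he
      -- inner sum equals det(X_s) * det(Y_s)
      rw [← Matrix.det_mul]
      rw [my_det_expand (X.submatrix id e) (Y.submatrix e id)]
      rw [show ∑ p : Fin n → Fin n, ∑ σ : Perm (Fin n),
          (ε σ) * ∏ i, (X.submatrix id e) (σ i) (p i) * (Y.submatrix e id) (p i) i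
          = ∑ p ∈ univ.filter (fun p : Fin n → Fin n => Function.Injective p),
            ∑ σ : Perm (Fin n),
            (ε σ) * ∏ i, (X.submatrix id e) (σ i) (p i) * (Y.submatrix e id) (p i) i from
        (Finset.sum_subset (filter_subset _ _) fun p _ hp =>
          my_det_mul_aux (by simpa using hp)).symm]
      refine (Finset.sum_bij (fun q _ => e ∘ q) ?_ ?_ ?_ ?_).symm
      · intro q hq
        simp only [mem_filter, mem_univ, true_and] at hq ⊢
        constructor
        · exact (enumOf_injective s h).comp hq
        · have : Finset.image (e ∘ q) univ = Finset.image e (Finset.image q univ) := by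
            rw [Finset.image_image]
        -- image q univ = univ since q injective on Fin n
          rw [this, Finset.image_univ_of_surjective
            (Finite.injective_iff_surjective.mp hq), he, enumOf_image]
      · intro q1 h1 q2 h2 hq
        funext i
        exact enumOf_injective s h (congrFun hq i)
      · intro p hp
        simp only [mem_filter, mem_univ, true_and] at hp
        obtain ⟨hpinj, hpimg⟩ := hp
        have hmem : ∀ i, p i ∈ s := fun i => by
          rw [← hpimg]; exact Finset.mem_image_of_mem _ (mem_univ i)
        refine ⟨fun i => (Fin.cast h) (s.equivFin ⟨p i, hmem i⟩), ?_, ?_⟩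
        · simp only [mem_filter, mem_univ, true_and]
          intro a b hab
          apply hpinj
          have := s.equivFin.injective (by
            apply Fin.val_injective
            simpa using congrArg Fin.val hab)
          exact congrArg Subtype.val this
        · funext i
          simp only [Function.comp_apply, he, enumOf]
          congr 1
          have : Fin.cast h.symm (Fin.cast h (s.equivFin ⟨p i, hmem i⟩))
              = s.equivFin ⟨p i, hmem i⟩ := by ext; simp
          rw [this, Equiv.symm_apply_apply]
      · intro q hq
        refine Finset.sum_congr rfl fun σ _ => ?_
        congr 1

end CB

open Equiv in
theorem detSq_eq {n : ℕ} {κ : Type*} [Fintype κ] [DecidableEq κ]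
    (M : Matrix (Fin n) κ ℝ) (s : Finset κ) (h : s.card = Fintype.card (Fin n))
    (h' : s.card = n) :
    detSq M s h = (M.submatrix id (enumOf s h')).det ^ 2 := by
  unfold detSq
  set e : Fin n ≃ Fin (Fintype.card (Fin n)) := finCongr (Fintype.card_fin n).symm with he
  set N := M.submatrix (Fintype.equivFin (Fin n)).symm
      (fun i => ((s.equivFin.symm (Fin.cast h.symm i)) : κ)) with hN
  have h1 : (N.submatrix e e).det = N.det := Matrix.det_submatrix_equiv_self e N
  set σ : Perm (Fin n) := e.trans (Fintype.equivFin (Fin n)).symm with hσ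
  have h2 : N.submatrix e e = (M.submatrix id (enumOf s h')).submatrix σ id := by
    ext i j
    simp only [hN, Matrix.submatrix_apply, id_eq, hσ, Equiv.trans_apply, enumOf]
    congr 2
  rw [← h1, h2, Matrix.det_permute, mul_pow]
  have h4 : (((Perm.sign σ : ℤ) : ℝ))^2 = 1 := by
    rcases Int.units_eq_one_or (Perm.sign σ) with hs | hs <;> simp [hs]
  rw [h4, one_mul]

theorem aeval_cuspForm_eq {n m' : ℕ} {κ : Type*} [Fintype κ] [DecidableEq κ]
    (Ahat : Matrix (Fin n) κ ℝ) (B : Matrix κ (Fin m') ℝ) (t : Fin m' → ℂ) :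
    MvPolynomial.aeval t (cuspFormPoly Ahat B) =
      det ((Ahat.map (algebraMap ℝ ℂ)) *
        (diagonal (fun k => ∑ l, (algebraMap ℝ ℂ (B k l)) * t l) *
          (Ahat.map (algebraMap ℝ ℂ))ᵀ)) := by
  classical
  set b : κ → ℂ := fun k => ∑ l, (algebraMap ℝ ℂ (B k l)) * t l with hb
  set XC : Matrix (Fin n) κ ℂ := Ahat.map (algebraMap ℝ ℂ) with hXC
  -- LHS: push aeval through
  have hL : MvPolynomial.aeval t (cuspFormPoly Ahat B) =
      ∑ s ∈ (univ.powersetCard (Fintype.card (Fin n)) : Finset (Finset κ)).attach,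
        (algebraMap ℝ ℂ (detSq Ahat s.1 (mem_powersetCard.mp s.2).2)) * ∏ k ∈ s.1, b k := by
    unfold cuspFormPoly
    rw [map_sum]
    refine Finset.sum_congr rfl fun s _ => ?_
    rw [_root_.map_mul, aeval_C, map_prod]
    congr 1
    refine Finset.prod_congr rfl fun k _ => ?_
    rw [map_sum]
    refine Finset.sum_congr rfl fun l _ => ?_
    rw [_root_.map_mul, aeval_C, aeval_X]
  rw [hL, my_cauchy_binet]
  -- match the two attach sums
  refine Finset.sum_nbij' (fun s => ⟨s.1, by
      have := mem_powersetCard.mp s.2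
      exact mem_powersetCard.mpr ⟨this.1, by rw [this.2, Fintype.card_fin]⟩⟩)
    (fun s => ⟨s.1, by
      have := mem_powersetCard.mp s.2
      exact mem_powersetCard.mpr ⟨this.1, by rw [this.2, Fintype.card_fin]⟩⟩) ?_ ?_ ?_ ?_ ?_
  · intro a _; exact Finset.mem_attach _ _
  · intro a _; exact Finset.mem_attach _ _
  · intro a _; rfl
  · intro a _; rfl
  · intro s _
    obtain ⟨s, hs⟩ := s
    have h : s.card = Fintype.card (Fin n) := (mem_powersetCard.mp hs).2
    have h' : s.card = n := by rwa [Fintype.card_fin] at h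
    simp only
    set e := enumOf s h' with he
    have hsub : ∀ (hh : s.card = n), enumOf s hh = e := fun hh => rfl
    rw [detSq_eq Ahat s h h']
    -- compute the Y-side determinant
    have hY : (diagonal b * XCᵀ).submatrix e id
        = diagonal (fun i => b (e i)) * (XC.submatrix id e)ᵀ := by
      ext i j
      simp [Matrix.diagonal_mul, Matrix.submatrix_apply]
    have hdetmap : det (XC.submatrix id e) = algebraMap ℝ ℂ (det (Ahat.submatrix id e)) := by
      rw [hXC, Matrix.submatrix_map]
      exact (RingHom.map_det (algebraMap ℝ ℂ) (Ahat.submatrix id e)).symm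
    have hprod : (∏ i, b (e i)) = ∏ k ∈ s, b k := by
      rw [← enumOf_image s h', Finset.prod_image (fun x _ y _ hxy => enumOf_injective s h' hxy)]
    rw [hsub]
    rw [hY, Matrix.det_mul, Matrix.det_diagonal, Matrix.det_transpose, hdetmap, hprod]
    push_cast
    ring

section LA
open Module
lemma my_isUnit_det_of_rank_eq {p : Type*} [Fintype p] [DecidableEq p] {K : Type*} [Field K]
    (M : Matrix p p K) (h : M.rank = Fintype.card p) : IsUnit M.det := by
  have htop : LinearMap.range M.mulVecLin = ⊤ :=
    Submodule.eq_top_of_finrank_eq (by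
      rw [show finrank K (LinearMap.range M.mulVecLin) = M.rank from rfl, h,
        Module.finrank_fintype_fun_eq_card])
  have hsurj : Function.Surjective M.mulVec := fun v => by
    have : v ∈ LinearMap.range M.mulVecLin := htop ▸ Submodule.mem_top
    obtain ⟨w, hw⟩ := this
    exact ⟨w, hw⟩
  exact (Matrix.mulVec_surjective_iff_exists_right_inverse.mp hsurj).elim
    fun _ hB => Matrix.isUnit_det_of_right_inverse hB

lemma my_isUnit_det_map {p : Type*} [Fintype p] [DecidableEq p]
    (M : Matrix p p ℝ) (h : IsUnit M.det) : IsUnit (M.map (algebraMap ℝ ℂ)).det := by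
  rw [show M.map (algebraMap ℝ ℂ) = (algebraMap ℝ ℂ).mapMatrix M from rfl, ← RingHom.map_det]
  exact h.map _

/-- complexified Gale dual has injective `mulVec`. -/
lemma my_Bc_inj {κ : Type*} [Fintype κ] [DecidableEq κ] {m : ℕ}
    (B : Matrix κ (Fin m) ℝ) (hB : B.rank = m) :
    Function.Injective ((B.map (algebraMap ℝ ℂ)).mulVec) := by
  have h1 : (Bᵀ * B).rank = Fintype.card (Fin m) := by
    rw [rank_transpose_mul_self, hB, Fintype.card_fin]
  have h2 : IsUnit ((Bᵀ * B).map (algebraMap ℝ ℂ)).det :=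
    my_isUnit_det_map _ (my_isUnit_det_of_rank_eq _ h1)
  have h3 : (Bᵀ * B).map (algebraMap ℝ ℂ)
      = (B.map (algebraMap ℝ ℂ))ᵀ * (B.map (algebraMap ℝ ℂ)) := by
    rw [Matrix.map_mul, Matrix.transpose_map]
  intro v w hvw
  have h4 : ((Bᵀ * B).map (algebraMap ℝ ℂ)) *ᵥ v = ((Bᵀ * B).map (algebraMap ℝ ℂ)) *ᵥ w := by
    rw [h3, ← Matrix.mulVec_mulVec, ← Matrix.mulVec_mulVec, hvw]
  exact (Matrix.mulVec_injective_iff_isUnit.mpr ((Matrix.isUnit_iff_isUnit_det _).mpr h2)) h4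

/-- complexified full-row-rank matrix has surjective `mulVec`. -/
lemma my_Ac_surj {κ : Type*} [Fintype κ] [DecidableEq κ] {r : ℕ}
    (A : Matrix (Fin r) κ ℝ) (hA : A.rank = r) :
    Function.Surjective ((A.map (algebraMap ℝ ℂ)).mulVec) := by
  have h1 : (A * Aᵀ).rank = Fintype.card (Fin r) := by
    rw [rank_self_mul_transpose, hA, Fintype.card_fin]
  have h2 : IsUnit ((A * Aᵀ).map (algebraMap ℝ ℂ)).det :=
    my_isUnit_det_map _ (my_isUnit_det_of_rank_eq _ h1)
  set Ac := A.map (algebraMap ℝ ℂ) with hAc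
  have h3 : (A * Aᵀ).map (algebraMap ℝ ℂ) = Ac * Acᵀ := by
    rw [Matrix.map_mul, Matrix.transpose_map]
  rw [h3] at h2
  intro x
  refine ⟨Acᵀ *ᵥ ((Ac * Acᵀ)⁻¹ *ᵥ x), ?_⟩
  rw [Matrix.mulVec_mulVec, Matrix.mulVec_mulVec, Matrix.mul_nonsing_inv _ h2]
  simp

/-- kernel of complexified `A` is contained in range of complexified Gale dual `B`. -/
lemma my_ker_sub_range {n m : ℕ}
    (A : Matrix (Fin (n + 1)) (Fin (n + 1 + m)) ℝ) (hArank : A.rank = n + 1)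
    (B : Matrix (Fin (n + 1 + m)) (Fin m) ℝ) (hBrank : B.rank = m) (hAB : A * B = 0)
    (c : Fin (n + 1 + m) → ℂ) (hc : (A.map (algebraMap ℝ ℂ)) *ᵥ c = 0) :
    ∃ v, (B.map (algebraMap ℝ ℂ)) *ᵥ v = c := by
  set Ac := A.map (algebraMap ℝ ℂ) with hAc
  set Bc := B.map (algebraMap ℝ ℂ) with hBc
  have hABc : Ac * Bc = 0 := by
    rw [hAc, hBc, ← Matrix.map_mul, hAB]
    ext i j
    simp
  have hle : LinearMap.range Bc.mulVecLin ≤ LinearMap.ker Ac.mulVecLin := by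
    rintro x ⟨v, rfl⟩
    simp only [LinearMap.mem_ker, mulVecLin_apply, Matrix.mulVec_mulVec, hABc]
    simp
  have hBinj : Function.Injective Bc.mulVec := my_Bc_inj B hBrank
  have hrange : finrank ℂ (LinearMap.range Bc.mulVecLin) = m := by
    have hkerB : LinearMap.ker Bc.mulVecLin = ⊥ := LinearMap.ker_eq_bot.mpr (by exact hBinj)
    have hsum := LinearMap.finrank_range_add_finrank_ker Bc.mulVecLin
    rw [hkerB, finrank_bot, Module.finrank_fintype_fun_eq_card] at hsum
    simp only [Fintype.card_fin] at hsum
    omega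
  have hker : finrank ℂ (LinearMap.ker Ac.mulVecLin) = m := by
    have hsum := LinearMap.finrank_range_add_finrank_ker Ac.mulVecLin
    have hrtop : LinearMap.range Ac.mulVecLin = ⊤ :=
      LinearMap.range_eq_top.mpr (my_Ac_surj A hArank)
    rw [hrtop, finrank_top, Module.finrank_fintype_fun_eq_card,
      Module.finrank_fintype_fun_eq_card] at hsum
    simp only [Fintype.card_fin] at hsum
    omega
  have heq : LinearMap.range Bc.mulVecLin = LinearMap.ker Ac.mulVecLin :=
    Submodule.eq_of_le_of_finrank_le hle (by rw [hrange, hker])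
  have hcmem : c ∈ LinearMap.ker Ac.mulVecLin := by
    simp only [LinearMap.mem_ker, mulVecLin_apply]; exact hc
  rw [← heq] at hcmem
  exact hcmem

/-- rank below the number of rows iff a nontrivial left relation exists. -/
lemma my_rank_lt_iff {ι κ : Type*} [Fintype ι] [Fintype κ] (M : Matrix ι κ ℂ) :
    M.rank < Fintype.card ι ↔ ∃ u ≠ 0, u ᵥ* M = 0 := by
  have hr : M.rank = finrank ℂ (Submodule.span ℂ (Set.range M.row)) :=
    rank_eq_finrank_span_row M
  have hle : finrank ℂ (Submodule.span ℂ (Set.range M.row)) ≤ Fintype.card ι :=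
    finrank_range_le_card M.row
  constructor
  · intro hlt
    have hnl : ¬ LinearIndependent ℂ M.row := by
      intro hli
      rw [linearIndependent_iff_card_eq_finrank_span] at hli
      rw [hr] at hlt
      rw [Set.finrank] at hli
      omega
    rw [Fintype.not_linearIndependent_iff] at hnl
    obtain ⟨g, hg, i, hgi⟩ := hnl
    refine ⟨g, fun h0 => hgi (by rw [h0]; rfl), ?_⟩
    funext k
    have := congrFun hg k
    simpa [Matrix.vecMul, dotProduct] using this
  · rintro ⟨u, hu, huM⟩
    have hnl : ¬ LinearIndependent ℂ M.row := by
      rw [Fintype.not_linearIndependent_iff]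
      obtain ⟨i, hi⟩ := Function.ne_iff.mp hu
      refine ⟨u, ?_, i, hi⟩
      funext k
      have := congrFun huM k
      simpa [Matrix.vecMul, dotProduct] using this
    have hne : finrank ℂ (Submodule.span ℂ (Set.range M.row)) ≠ Fintype.card ι := by
      intro hcontr
      exact hnl (linearIndependent_iff_card_eq_finrank_span.mpr (by rw [Set.finrank, hcontr]))
    omega

end LA


/-- **Cusps of the discriminant via the cuspidal form.**
Let `A` be a point configuration with first row all ones, `Â` its lower `n` rows, and `B`
a Gale dual.  For `ω ∈ ℂ^{1+n}` and `t ∈ ℂ^m` with `⟨β_k,t⟩ ≠ 0` for all `k`, the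
Jacobian `J(ω;t)` of the Horn–Kapranov parametrization (rows `Â_{ik}⟨β_k,t⟩e^{⟨ω,α_k⟩}`
for `i ≤ n` and `β_{kj}e^{⟨ω,α_k⟩}` for `j ≤ m`) has rank at most `n+m-1` if and only if
the cuspidal form vanishes at `t`. -/
theorem cusp_iff_cuspForm_zero {n m : ℕ}
    (A : Matrix (Fin (n + 1)) (Fin (n + 1 + m)) ℝ)
    (hA1 : ∀ k, A 0 k = 1) (hArank : A.rank = n + 1)
    (B : Matrix (Fin (n + 1 + m)) (Fin m) ℝ) (hGale : IsGaleDual A B)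
    (ω : Fin (n + 1) → ℂ) (t : Fin m → ℂ)
    (ht : ∀ k, (∑ l, (B k l : ℂ) * t l) ≠ 0) :
    (Matrix.fromRows
        (Matrix.of fun (i : Fin n) (k : Fin (n + 1 + m)) =>
          (A i.succ k : ℂ) * (∑ l, (B k l : ℂ) * t l) *
            Complex.exp (∑ i', ω i' * (A i' k : ℂ)))
        (Matrix.of fun (j : Fin m) (k : Fin (n + 1 + m)) =>
          (B k j : ℂ) * Complex.exp (∑ i', ω i' * (A i' k : ℂ)))).rank ≤ n + m - 1 ↔
      MvPolynomial.aeval t (cuspFormPoly (A.submatrix Fin.succ id) B) = 0 := by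
  classical
  -- trivial case `m = 0` is impossible by `ht`
  rcases Nat.eq_zero_or_pos m with hm | hm
  · subst hm
    exact absurd (by simp) (ht ⟨0, by omega⟩)
  -- notation
  set f := algebraMap ℝ ℂ with hf
  set Ac : Matrix (Fin (n + 1)) (Fin (n + 1 + m)) ℂ := A.map f with hAc
  set Bc : Matrix (Fin (n + 1 + m)) (Fin m) ℂ := B.map f with hBc
  set Ahc : Matrix (Fin n) (Fin (n + 1 + m)) ℂ := (A.submatrix Fin.succ id).map f with hAhc
  set b : Fin (n + 1 + m) → ℂ := fun k => ∑ l, f (B k l) * t l with hb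
  have hbt : ∀ k, (∑ l, ((B k l : ℝ) : ℂ) * t l) = b k := fun k => by
    simp [hb, hf]
  have hBrank : B.rank = m := by
    have := hGale.1; rwa [Fintype.card_fin] at this
  have hABc : Ac * Bc = 0 := by
    rw [hAc, hBc, ← Matrix.map_mul, hGale.2]
    ext i j; simp
  have hAhBc : Ahc * Bc = 0 := by
    ext i j
    have := congrFun (congrFun hABc i.succ) j
    simpa [Matrix.mul_apply, hAhc, hAc] using this
  have hbBt : b = Bc *ᵥ t := by
    funext k
    simp [hb, hBc, Matrix.mulVec, dotProduct]
  set E : Fin (n + 1 + m) → ℂ := fun k => Complex.exp (∑ i', ω i' * (A i' k : ℂ)) with hE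
  set M' : Matrix (Fin n ⊕ Fin m) (Fin (n + 1 + m)) ℂ :=
    Matrix.fromRows (Matrix.of fun i k => Ahc i k * b k)
      (Matrix.of fun j k => Bc k j) with hM'
  set G : Matrix (Fin n) (Fin n) ℂ := Ahc * (diagonal b * Ahcᵀ) with hG
  -- the Jacobian is M' * diagonal E
  have hJ : (Matrix.fromRows
        (Matrix.of fun (i : Fin n) (k : Fin (n + 1 + m)) =>
          (A i.succ k : ℂ) * (∑ l, (B k l : ℂ) * t l) *
            Complex.exp (∑ i', ω i' * (A i' k : ℂ)))
        (Matrix.of fun (j : Fin m) (k : Fin (n + 1 + m)) =>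
          (B k j : ℂ) * Complex.exp (∑ i', ω i' * (A i' k : ℂ))))
      = M' * diagonal E := by
    ext rj k
    rw [Matrix.mul_diagonal]
    cases rj with
    | inl i => simp [hM', hAhc, hbt k, hE, hf]
    | inr j => simp [hM', hBc, hE, hf]
  have hdE : IsUnit (diagonal E).det := by
    rw [Matrix.det_diagonal]
    exact isUnit_iff_ne_zero.mpr (Finset.prod_ne_zero_iff.mpr fun k _ => Complex.exp_ne_zero _)
  have hrankJ : (M' * diagonal E).rank = M'.rank :=
    Matrix.rank_mul_eq_left_of_isUnit_det _ _ hdE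
  -- rank bound iff
  have hcard : Fintype.card (Fin n ⊕ Fin m) = n + m := by simp
  have hrle : M'.rank ≤ n + m := by
    have := Matrix.rank_le_card_height M'
    rwa [hcard] at this
  rw [hJ, hrankJ]
  have hstep1 : M'.rank ≤ n + m - 1 ↔ M'.rank < Fintype.card (Fin n ⊕ Fin m) := by
    rw [hcard]; omega
  rw [hstep1, my_rank_lt_iff]
  -- identify RHS with `det G = 0`
  rw [show MvPolynomial.aeval t (cuspFormPoly (A.submatrix Fin.succ id) B)
      = det G from aeval_cuspForm_eq (A.submatrix Fin.succ id) B t]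
  rw [← Matrix.exists_vecMul_eq_zero_iff]
  -- main equivalence
  constructor
  · rintro ⟨u, hu, huM⟩
    set u₁ : Fin n → ℂ := u ∘ Sum.inl with hu₁
    set u₂ : Fin m → ℂ := u ∘ Sum.inr with hu₂
    have key : ∀ k, (u₁ ᵥ* Ahc) k * b k + (Bc *ᵥ u₂) k = 0 := by
      intro k
      have := congrFun huM k
      rw [Matrix.vecMul] at this
      rw [show (fun i => M' i k) = fun i => M' i k from rfl] at this
      have hsplit : (u ⬝ᵥ fun i => M' i k)
          = (∑ i, u₁ i * (Ahc i k * b k)) + ∑ j, u₂ j * Bc k j := by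
        rw [dotProduct, Fintype.sum_sum_type]
        simp [hM', hu₁, hu₂]
      rw [hsplit] at this
      rw [Matrix.vecMul, dotProduct, Matrix.mulVec, dotProduct]
      rw [Finset.sum_mul]
      calc (∑ i, u₁ i * Ahc i k * b k) + ∑ j, Bc k j * u₂ j
          = (∑ i, u₁ i * (Ahc i k * b k)) + ∑ j, u₂ j * Bc k j := by
            congr 1
            · exact Finset.sum_congr rfl fun i _ => by ring
            · exact Finset.sum_congr rfl fun j _ => by ring
        _ = 0 := this
    have hc_eq : (fun k => (u₁ ᵥ* Ahc) k * b k) = -(Bc *ᵥ u₂) := by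
      funext k
      have := key k
      simp only [Pi.neg_apply]
      linear_combination this
    have hu₁G : u₁ ᵥ* G = 0 := by
      rw [hG, ← Matrix.vecMul_vecMul, ← Matrix.vecMul_vecMul]
      rw [show u₁ ᵥ* Ahc ᵥ* diagonal b = fun k => (u₁ ᵥ* Ahc) k * b k from
        funext fun k => Matrix.vecMul_diagonal _ _ _]
      rw [hc_eq, Matrix.neg_vecMul, Matrix.vecMul_transpose,
        Matrix.mulVec_mulVec, hAhBc, Matrix.zero_mulVec, neg_zero]
    have hu₁ne : u₁ ≠ 0 := by
      intro h0
      have hBu₂ : Bc *ᵥ u₂ = 0 := by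
        funext k
        have := key k
        rw [show (u₁ ᵥ* Ahc) = 0 by rw [h0]; exact Matrix.zero_vecMul _] at this
        simpa using this
      have hu₂0 : u₂ = 0 := my_Bc_inj B hBrank (by rw [hBu₂, Matrix.mulVec_zero])
      apply hu
      funext i
      cases i with
      | inl i => exact congrFun h0 i
      | inr j => exact congrFun hu₂0 j
    exact ⟨u₁, hu₁ne, hu₁G⟩
  · rintro ⟨w, hw, hwG⟩
    set c : Fin (n + 1 + m) → ℂ := fun k => (w ᵥ* Ahc) k * b k with hc
    have hcdiag : c = (w ᵥ* Ahc) ᵥ* diagonal b := by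
      funext k
      rw [Matrix.vecMul_diagonal]
    have hAhc_c : Ahc *ᵥ c = 0 := by
      rw [← Matrix.vecMul_transpose]
      have h5 : c ᵥ* Ahcᵀ = w ᵥ* G := by
        rw [hcdiag]
        simp only [Matrix.vecMul_vecMul, Matrix.mul_assoc, hG]
      rw [h5, hwG]
    have hsum_c : (∑ k, c k) = 0 := by
      have : (∑ k, c k) = (w ᵥ* Ahc) ⬝ᵥ (Bc *ᵥ t) := by
        rw [dotProduct, ← hbBt]
      rw [this, Matrix.dotProduct_mulVec, Matrix.vecMul_vecMul, hAhBc,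
        Matrix.vecMul_zero, zero_dotProduct]
    have hAc_c : Ac *ᵥ c = 0 := by
      funext r
      induction r using Fin.cases with
      | zero =>
        have : (Ac *ᵥ c) 0 = ∑ k, c k := by
          rw [Matrix.mulVec, dotProduct]
          refine Finset.sum_congr rfl fun k _ => ?_
          rw [hAc]
          simp [hA1 k, hf]
        rw [this, hsum_c]; rfl
      | succ i =>
        have : (Ac *ᵥ c) i.succ = (Ahc *ᵥ c) i := by
          rw [Matrix.mulVec, Matrix.mulVec, dotProduct, dotProduct]
          exact Finset.sum_congr rfl fun k _ => rfl
        rw [this, hAhc_c]; rfl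
    obtain ⟨v, hv⟩ := my_ker_sub_range A hArank B hBrank hGale.2 c hAc_c
    refine ⟨Sum.elim w (-v), ?_, ?_⟩
    · intro h0
      apply hw
      funext i
      exact congrFun h0 (Sum.inl i)
    · funext k
      rw [Matrix.vecMul, dotProduct, Fintype.sum_sum_type]
      have h1 : ∑ i, Sum.elim w (-v) (Sum.inl i) * M' (Sum.inl i) k = c k := by
        rw [hc]
        simp only [Sum.elim_inl]
        rw [Matrix.vecMul, dotProduct, Finset.sum_mul]
        refine Finset.sum_congr rfl fun i _ => ?_
        have hM1 : M' (Sum.inl i) k = Ahc i k * b k := rfl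
        rw [hM1]
        ring
      have h2 : ∑ j, Sum.elim w (-v) (Sum.inr j) * M' (Sum.inr j) k = -(c k) := by
        simp only [Sum.elim_inr]
        rw [← hv]
        rw [Matrix.mulVec, dotProduct]
        rw [← Finset.sum_neg_distrib]
        refine Finset.sum_congr rfl fun j _ => ?_
        have hM2 : M' (Sum.inr j) k = Bc k j := rfl
        rw [Pi.neg_apply, hM2, hBc, hf]
        ring
      rw [h1, h2]
      simp
end

section
/- Let A be a point configuration with first row the all-ones vector, Â the matrix of its remaining n rows (columns â_1,…,â_N ∈ ℝ^n), and B a Gale dual. Then for every t ∈ ℂ^m, the determinant of the n×n matrix whose (i,j) entry is Σ_{k=1}^N Â_{ik}·Â_{jk}·⟨β_k,t⟩ equals P_A(t). Consequently (extension of Katz's theorem to exponential sums): for ω ∈ ℂ^n and t ∈ ℂ^m, the exponential sum f(w) = Σ_{k=1}^N e^{⟨ω,â_k⟩}⟨β_k,t⟩e^{⟨w,â_k⟩}, which has a singular point at w = −ω, has singular Hessian matrix (∂²f/∂w_i∂w_j(−ω))_{i,j=1}^n if and only if P_A(t) = 0. -/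
open Matrix MvPolynomial Finset

-- ========== auxiliary machinery ==========

open Equiv


noncomputable def permOf {n' N : ℕ} (g0 φ : Fin n' → Fin N)
    (hg : Function.Injective g0) (hφ : Function.Injective φ)
    (hr : ∀ i, φ i ∈ Finset.image g0 Finset.univ) : Equiv.Perm (Fin n') :=
  (Equiv.ofBijective (fun i => (⟨φ i, hr i⟩ : {x // x ∈ Finset.image g0 Finset.univ}))
      ((Fintype.bijective_iff_injective_and_card _).mpr
        ⟨fun a b h => hφ (congrArg Subtype.val h), by
          rw [Fintype.card_coe, Finset.card_image_of_injective _ hg, Finset.card_univ,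
            Fintype.card_fin]⟩)).trans
  (Equiv.ofBijective (fun i => (⟨g0 i, Finset.mem_image_of_mem g0 (Finset.mem_univ i)⟩ :
      {x // x ∈ Finset.image g0 Finset.univ}))
      ((Fintype.bijective_iff_injective_and_card _).mpr
        ⟨fun a b h => hg (congrArg Subtype.val h), by
          rw [Fintype.card_coe, Finset.card_image_of_injective _ hg, Finset.card_univ,
            Fintype.card_fin]⟩)).symm

lemma permOf_spec {n' N : ℕ} (g0 φ : Fin n' → Fin N)
    (hg : Function.Injective g0) (hφ : Function.Injective φ)
    (hr : ∀ i, φ i ∈ Finset.image g0 Finset.univ) (i : Fin n') :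
    g0 (permOf g0 φ hg hφ hr i) = φ i := by
  simp only [permOf, Equiv.trans_apply]
  exact congrArg Subtype.val
    ((Equiv.ofBijective (fun i => (⟨g0 i, Finset.mem_image_of_mem g0 (Finset.mem_univ i)⟩ :
        {x // x ∈ Finset.image g0 Finset.univ}))
      ((Fintype.bijective_iff_injective_and_card _).mpr
        ⟨fun a b h => hg (congrArg Subtype.val h), by
          rw [Fintype.card_coe, Finset.card_image_of_injective _ hg, Finset.card_univ,
            Fintype.card_fin]⟩)).apply_symm_apply _)

lemma permOf_eq_of {n' N : ℕ} (g0 φ : Fin n' → Fin N)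
    (hg : Function.Injective g0) (hφ : Function.Injective φ)
    (hr : ∀ i, φ i ∈ Finset.image g0 Finset.univ) (π : Equiv.Perm (Fin n'))
    (h : ∀ i, φ i = g0 (π i)) : permOf g0 φ hg hφ hr = π :=
  Equiv.ext fun i => hg (by rw [permOf_spec g0 φ hg hφ hr i]; exact h i)

lemma cb {n n' N : ℕ} (hn : n' = n) (M : Matrix (Fin n) (Fin N) ℂ) (c : Fin N → ℂ)
    (g : (s : Finset (Fin N)) → s.card = n' → (Fin n → Fin N))
    (hmem : ∀ s h i, g s h i ∈ s) (hinj : ∀ s h, Function.Injective (g s h)) :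
    (Matrix.of fun i j : Fin n => ∑ k, M i k * M j k * c k).det =
    ∑ s ∈ (univ.powersetCard n').attach,
      (M.submatrix id (g s.1 (mem_powersetCard.mp s.2).2)).det ^ 2 * ∏ k ∈ s.1, c k := by
  subst hn
  classical
  set f := (detRowAlternating : (Fin n' → ℂ) [⋀^Fin n']→ₗ[ℂ] ℂ) with hf
  have hM : (Matrix.of fun i j : Fin n' => ∑ k, M i k * M j k * c k) =
      fun i => ∑ k, (M i k * c k) • (fun j => M j k) := by
    funext i j
    simp only [of_apply, Finset.sum_apply, Pi.smul_apply, smul_eq_mul]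
    exact Finset.sum_congr rfl fun k _ => by ring
  have hdet : (Matrix.of fun i j : Fin n' => ∑ k, M i k * M j k * c k).det =
      f (fun i => ∑ k, (M i k * c k) • (fun j => M j k)) := by rw [hM]; rfl
  have hsum := f.toMultilinearMap.map_sum
    (g := fun (i : Fin n') (k : Fin N) => (M i k * c k) • fun j => M j k)
  simp only [AlternatingMap.coe_multilinearMap] at hsum
  rw [hdet, hsum]
  have hterm : ∀ φ : Fin n' → Fin N,
      (f fun i => (M i (φ i) * c (φ i)) • (fun j => M j (φ i))) =
      (∏ i, M i (φ i) * c (φ i)) * (Matrix.of fun i j => M j (φ i)).det := by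
    intro φ
    have := f.toMultilinearMap.map_smul_univ (fun i => M i (φ i) * c (φ i))
      (fun i j => M j (φ i))
    simp only [AlternatingMap.coe_multilinearMap, smul_eq_mul] at this
    exact this
  simp only [hterm]
  set F : (Fin n' → Fin N) → ℂ :=
    fun φ => (∏ i, M i (φ i) * c (φ i)) * (Matrix.of fun i j => M j (φ i)).det with hF
  show ∑ φ : Fin n' → Fin N, F φ = _
  rw [← Finset.sum_filter_of_ne (p := fun φ => Function.Injective φ)
    (fun φ _ hne => by
      by_contra hni
      apply hne
      simp only [Function.Injective, not_forall] at hni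
      obtain ⟨i, j, hij, hne'⟩ := hni
      have : (Matrix.of fun i j => M j (φ i)).det = 0 :=
        Matrix.det_zero_of_row_eq hne' (by funext j'; simp [hij])
      simp [hF, this])]
  -- basic facts about the enumerations g
  have hgimg : ∀ (s : Finset (Fin N)) (hs : s.card = n'),
      Finset.image (g s hs) univ = s := by
    intro s hs
    apply Finset.eq_of_subset_of_card_le
    · intro k hk
      simp only [Finset.mem_image] at hk
      obtain ⟨i, _, rfl⟩ := hk
      exact hmem s hs i
    · rw [Finset.card_image_of_injective _ (hinj s hs), card_univ, Fintype.card_fin, hs]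
  have himg : ∀ (s : Finset (Fin N)) (hs : s.card = n') (π : Perm (Fin n')),
      Finset.image (fun i => g s hs (π i)) univ = s := by
    intro s hs π
    have : Finset.image (fun i => g s hs (π i)) univ
        = Finset.image (g s hs) (Finset.image (⇑π) univ) := by
      rw [Finset.image_image]; rfl
    rw [this, Finset.image_univ_equiv, hgimg]
  -- value of the inner sum over permutations
  have hS : ∀ (s : Finset (Fin N)) (hs : s.card = n'),
      ∑ π : Perm (Fin n'), F (g s hs ∘ π)
        = (M.submatrix id (g s hs)).det ^ 2 * ∏ k ∈ s, c k := by
    intro s hs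
    set X := M.submatrix id (g s hs) with hX
    have h1 : ∀ π : Perm (Fin n'), F (g s hs ∘ π) =
        (((Perm.sign π : ℤ) : ℂ) * ∏ i, X i (π i)) * ((∏ k ∈ s, c k) * X.det) := by
      intro π
      have hdet2 : (Matrix.of fun i j => M j (g s hs (π i))).det
          = ((Perm.sign π : ℤ) : ℂ) * X.det := by
        have he : (Matrix.of fun i j => M j (g s hs (π i))) = (Xᵀ).submatrix π _root_.id := by
          ext i j; simp [hX]
        rw [he, Matrix.det_permute, Matrix.det_transpose]
        try norm_cast
      have hc : ∏ i, c (g s hs (π i)) = ∏ k ∈ s, c k := by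
        have hI : ∀ a ∈ univ, ∀ b ∈ univ,
            (fun i => g s hs (π i)) a = (fun i => g s hs (π i)) b → a = b :=
          fun a _ b _ hab => π.injective (hinj s hs hab)
        rw [← Finset.prod_image hI, himg s hs π]
      have hm : ∏ i, M i (g s hs (π i)) = ∏ i, X i (π i) := by
        refine Finset.prod_congr rfl fun i _ => ?_
        simp [hX]
      simp only [hF, Function.comp_apply, Finset.prod_mul_distrib, hc, hdet2, hm]
      ring
    rw [Finset.sum_congr rfl fun π _ => h1 π, ← Finset.sum_mul]
    have h2 : ∑ π : Perm (Fin n'), ((Perm.sign π : ℤ) : ℂ) * ∏ i, X i (π i) = X.det := by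
      rw [← Matrix.det_transpose X, Matrix.det_apply']
      exact Finset.sum_congr rfl fun π _ => rfl
    rw [h2]
    try ring
  -- reorganize the sum over injective functions as a sum over (subset, permutation) pairs
  calc ∑ φ ∈ univ.filter (fun φ => Function.Injective φ), F φ
      = ∑ p ∈ ((univ.powersetCard n').attach.sigma fun _ => (univ : Finset (Perm (Fin n')))),
          F (g p.1.1 (mem_powersetCard.mp p.1.2).2 ∘ p.2) := by
        have hcard : ∀ (φ : Fin n' → Fin N), Function.Injective φ →
            (Finset.image φ univ).card = n' := fun φ hφ => by
          rw [Finset.card_image_of_injective _ hφ, card_univ, Fintype.card_fin]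
        have hr : ∀ (φ : Fin n' → Fin N) (hφ : φ ∈ univ.filter (fun φ => Function.Injective φ))
            (i : Fin n'), φ i ∈ Finset.image
              (g (Finset.image φ univ) (hcard φ (mem_filter.mp hφ).2)) univ := fun φ hφ i => by
          rw [hgimg]
          exact Finset.mem_image_of_mem φ (Finset.mem_univ i)
        refine Finset.sum_bij'
          (i := fun φ hφ => ⟨⟨Finset.image φ univ, mem_powersetCard.mpr
              ⟨Finset.subset_univ _, hcard φ (mem_filter.mp hφ).2⟩⟩,
            permOf (g (Finset.image φ univ) (hcard φ (mem_filter.mp hφ).2)) φ (hinj _ _)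
              (mem_filter.mp hφ).2 (hr φ hφ)⟩)
          (j := fun p hp => g p.1.1 (mem_powersetCard.mp p.1.2).2 ∘ p.2)
          ?_ ?_ ?_ ?_ ?_
        · intro φ hφ
          exact Finset.mem_sigma.mpr ⟨Finset.mem_attach _ _, Finset.mem_univ _⟩
        · intro p hp
          refine mem_filter.mpr ⟨Finset.mem_univ _, ?_⟩
          exact (hinj _ _).comp p.2.injective
        · intro φ hφ
          funext i
          exact permOf_spec (g _ (hcard φ (mem_filter.mp hφ).2)) φ (hinj _ _)
            (mem_filter.mp hφ).2 (hr φ hφ) i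
        · intro p hp
          obtain ⟨⟨s, hsmem⟩, π⟩ := p
          have hs := (mem_powersetCard.mp hsmem).2
          have himg' : Finset.image (g s hs ∘ ⇑π) univ = s := himg s hs π
          have hgg : ∀ (h' : (Finset.image (g s hs ∘ ⇑π) univ).card = n'),
              g (Finset.image (g s hs ∘ ⇑π) univ) h' = g s hs := by
            rw [himg']
            intro h'
            rfl
          have hphi : Function.Injective (g s hs ∘ ⇑π) := (hinj s hs).comp π.injective
          have hmf : (g s hs ∘ ⇑π) ∈ univ.filter (fun φ => Function.Injective φ) :=
            mem_filter.mpr ⟨Finset.mem_univ _, hphi⟩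
          exact Sigma.ext (Subtype.ext himg') (heq_of_eq (permOf_eq_of
            (g (Finset.image (g s hs ∘ ⇑π) univ) (hcard _ hphi)) (g s hs ∘ ⇑π)
            (hinj _ _) hphi (hr _ hmf) π
            (fun i => (congrFun (hgg _) (π i)).symm)))
        · intro φ hφ
          exact (congrArg F (funext fun i =>
            permOf_spec (g _ (hcard φ (mem_filter.mp hφ).2)) φ (hinj _ _)
              (mem_filter.mp hφ).2 (hr φ hφ) i)).symm
    _ = ∑ s ∈ (univ.powersetCard n').attach, ∑ π : Perm (Fin n'),
          F (g s.1 (mem_powersetCard.mp s.2).2 ∘ π) := by rw [Finset.sum_sigma]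
    _ = ∑ s ∈ (univ.powersetCard n').attach,
          (M.submatrix id (g s.1 (mem_powersetCard.mp s.2).2)).det ^ 2 * ∏ k ∈ s.1, c k :=
        Finset.sum_congr rfl fun s _ => hS s.1 (mem_powersetCard.mp s.2).2

noncomputable def gfun {n N : ℕ} (s : Finset (Fin N)) (h : s.card = Fintype.card (Fin n)) : Fin n → Fin N :=
  fun i => ((s.equivFin.symm (Fin.cast h.symm (Fintype.equivFin (Fin n) i))) : Fin N)

lemma gfun_mem {n N : ℕ} (s : Finset (Fin N)) (h : s.card = Fintype.card (Fin n)) (i : Fin n) :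
    gfun s h i ∈ s := Finset.coe_mem _

lemma gfun_inj {n N : ℕ} (s : Finset (Fin N)) (h : s.card = Fintype.card (Fin n)) :
    Function.Injective (gfun s h) := by
  intro a b hab
  unfold gfun at hab
  have := Subtype.coe_injective hab
  have := s.equivFin.symm.injective this
  have := Fin.cast_injective _ this
  exact (Fintype.equivFin (Fin n)).injective this

lemma detSq_cast {n N : ℕ} (M : Matrix (Fin n) (Fin N) ℝ) (s : Finset (Fin N))
    (h : s.card = Fintype.card (Fin n)) :
    ((detSq M s h : ℝ) : ℂ) =
      ((M.map Complex.ofReal).submatrix id (gfun s h)).det ^ 2 := by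
  unfold detSq
  rw [Complex.ofReal_pow]
  rw [show ((((M.submatrix (Fintype.equivFin (Fin n)).symm
      fun i => ((s.equivFin.symm (Fin.cast h.symm i)) : Fin N)).det : ℝ)) : ℂ)
    = ((M.submatrix (Fintype.equivFin (Fin n)).symm
      fun i => ((s.equivFin.symm (Fin.cast h.symm i)) : Fin N)).map Complex.ofReal).det
    from RingHom.map_det Complex.ofRealHom _]
  congr 1
  have : ((M.submatrix (Fintype.equivFin (Fin n)).symm
        fun i => ((s.equivFin.symm (Fin.cast h.symm i)) : Fin N)).map Complex.ofReal)
      = ((M.map Complex.ofReal).submatrix (Fintype.equivFin (Fin n)).symm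
        fun i => ((s.equivFin.symm (Fin.cast h.symm i)) : Fin N)) := by
    ext i j; simp [Matrix.map_apply, Matrix.submatrix_apply]
  rw [this]
  rw [← Matrix.det_submatrix_equiv_self (Fintype.equivFin (Fin n))]
  congr 1
  ext i j
  simp [gfun, Matrix.submatrix_apply]

lemma part1 {n N m : ℕ} (M : Matrix (Fin n) (Fin N) ℝ) (B : Matrix (Fin N) (Fin m) ℝ)
    (t : Fin m → ℂ) :
    (Matrix.of fun i j : Fin n =>
        ∑ k, (M i k : ℂ) * (M j k : ℂ) * (∑ l, (B k l : ℂ) * t l)).det =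
      MvPolynomial.aeval t (cuspFormPoly M B) := by
  rw [cuspFormPoly, _root_.map_sum]
  have hterm : ∀ s ∈ (univ.powersetCard (Fintype.card (Fin n))).attach,
      (MvPolynomial.aeval t) (C (detSq M s.1 (mem_powersetCard.mp s.2).2) *
        ∏ k ∈ s.1, ∑ l, C (B k l) * X l)
      = ((M.map Complex.ofReal).submatrix id
          (gfun s.1 (mem_powersetCard.mp s.2).2)).det ^ 2 *
        ∏ k ∈ s.1, ∑ l, (B k l : ℂ) * t l := by
    intro s _
    rw [_root_.map_mul, _root_.map_prod, ← detSq_cast]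
    congr 1
    · simp
    · refine Finset.prod_congr rfl fun k _ => ?_
      simp
  rw [Finset.sum_congr rfl hterm]
  exact cb (Fintype.card_fin n) (M.map Complex.ofReal) (fun k => ∑ l, (B k l : ℂ) * t l)
    gfun gfun_mem gfun_inj


noncomputable def Lmap {n N : ℕ} (b : Fin n → Fin N → ℂ) (k : Fin N) : (Fin n → ℂ) →L[ℂ] ℂ :=
  ∑ i, b i k • (ContinuousLinearMap.proj i : ((Fin n → ℂ)) →L[ℂ] ℂ)

lemma Lmap_apply {n N : ℕ} (b : Fin n → Fin N → ℂ) (k : Fin N) (w : Fin n → ℂ) :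
    Lmap b k w = ∑ i, w i * b i k := by
  simp [Lmap, ContinuousLinearMap.sum_apply, ContinuousLinearMap.proj_apply, mul_comm]

lemma Lmap_single {n N : ℕ} (b : Fin n → Fin N → ℂ) (k : Fin N) (j : Fin n) :
    Lmap b k (Pi.single j 1) = b j k := by
  rw [Lmap_apply, Finset.sum_eq_single j]
  · simp
  · intro i _ hij; simp [Pi.single_apply, hij]
  · simp

lemma hasFDerivAt_sum_exp {n N : ℕ} (a : Fin N → ℂ) (b : Fin n → Fin N → ℂ) (w : Fin n → ℂ) :
    HasFDerivAt (fun w : Fin n → ℂ => ∑ k, a k * Complex.exp (∑ i, w i * b i k))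
      (∑ k, (a k * Complex.exp (∑ i, w i * b i k)) • Lmap b k) w := by
  apply HasFDerivAt.fun_sum
  intro k _
  have h0 : HasFDerivAt (fun w : Fin n → ℂ => (Lmap b k) w) (Lmap b k) w :=
    (Lmap b k).hasFDerivAt
  have h1 := h0.cexp
  simp only [Lmap_apply] at h1
  have h2 := h1.const_mul (a k)
  simpa [smul_smul] using h2

lemma deriv1 {n N : ℕ} (a : Fin N → ℂ) (b : Fin n → Fin N → ℂ) (j : Fin n) :
    (fun w : Fin n → ℂ =>
        fderiv ℂ (fun w : Fin n → ℂ => ∑ k, a k * Complex.exp (∑ i, w i * b i k)) w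
          (Pi.single j 1))
      = fun w : Fin n → ℂ => ∑ k, (a k * b j k) * Complex.exp (∑ i, w i * b i k) := by
  funext w
  rw [(hasFDerivAt_sum_exp a b w).fderiv]
  rw [ContinuousLinearMap.sum_apply]
  refine Finset.sum_congr rfl fun k _ => ?_
  rw [ContinuousLinearMap.smul_apply, Lmap_single, smul_eq_mul]
  ring

lemma deriv2 {n N : ℕ} (a : Fin N → ℂ) (b : Fin n → Fin N → ℂ) (i j : Fin n) (x : Fin n → ℂ) :
    fderiv ℂ (fun w : Fin n → ℂ =>
        fderiv ℂ (fun w : Fin n → ℂ => ∑ k, a k * Complex.exp (∑ i, w i * b i k)) w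
          (Pi.single j 1)) x (Pi.single i 1)
      = ∑ k, (a k * b j k * b i k) * Complex.exp (∑ i', x i' * b i' k) := by
  rw [deriv1 a b j]
  rw [(hasFDerivAt_sum_exp (fun k => a k * b j k) b x).fderiv]
  rw [ContinuousLinearMap.sum_apply]
  refine Finset.sum_congr rfl fun k _ => ?_
  rw [ContinuousLinearMap.smul_apply, Lmap_single, smul_eq_mul]
  ring


/-- **Katz's theorem for exponential sums.**
Let `A` be a point configuration with first row all ones and lower rows `Â` (columns
`â_k ∈ ℝⁿ`), and `B` a Gale dual.  Then for every `t ∈ ℂ^m` the determinant of the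
`n × n` matrix with entries `Σ_k Â_{ik} Â_{jk} ⟨β_k,t⟩` equals `P_A(t)`.  Consequently,
for `ω ∈ ℂⁿ`, the exponential sum `f(w) = Σ_k e^{⟨ω,â_k⟩}⟨β_k,t⟩e^{⟨w,â_k⟩}` (which is
singular at `w = -ω`) has singular Hessian `(∂²f/∂w_i∂w_j(-ω))` iff `P_A(t) = 0`. -/
theorem hessian_det_eq_cuspForm {n m : ℕ}
    (A : Matrix (Fin (n + 1)) (Fin (n + 1 + m)) ℝ)
    (hA1 : ∀ k, A 0 k = 1) (hArank : A.rank = n + 1)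
    (B : Matrix (Fin (n + 1 + m)) (Fin m) ℝ) (hGale : IsGaleDual A B) :
    (∀ t : Fin m → ℂ,
      (Matrix.of fun i j : Fin n =>
          ∑ k, (A i.succ k : ℂ) * (A j.succ k : ℂ) * (∑ l, (B k l : ℂ) * t l)).det =
        MvPolynomial.aeval t (cuspFormPoly (A.submatrix Fin.succ id) B)) ∧
    (∀ (ω : Fin n → ℂ) (t : Fin m → ℂ) (f : (Fin n → ℂ) → ℂ),
      f = (fun w => ∑ k, Complex.exp (∑ i, ω i * (A i.succ k : ℂ)) *
          (∑ l, (B k l : ℂ) * t l) * Complex.exp (∑ i, w i * (A i.succ k : ℂ))) →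
      ((Matrix.of fun i j : Fin n =>
          fderiv ℂ (fun w => fderiv ℂ f w (Pi.single j 1)) (fun i' => -ω i')
            (Pi.single i 1)).det = 0 ↔
        MvPolynomial.aeval t (cuspFormPoly (A.submatrix Fin.succ id) B) = 0)) := by
  have hpart1 : ∀ t : Fin m → ℂ,
      (Matrix.of fun i j : Fin n =>
          ∑ k, (A i.succ k : ℂ) * (A j.succ k : ℂ) * (∑ l, (B k l : ℂ) * t l)).det =
        MvPolynomial.aeval t (cuspFormPoly (A.submatrix Fin.succ id) B) := fun t =>
    part1 (A.submatrix Fin.succ id) B t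
  refine ⟨hpart1, ?_⟩
  intro ω t f hf
  subst hf
  have hmat : (Matrix.of fun i j : Fin n =>
      fderiv ℂ (fun w => fderiv ℂ (fun w => ∑ k,
          Complex.exp (∑ i, ω i * (A i.succ k : ℂ)) *
          (∑ l, (B k l : ℂ) * t l) * Complex.exp (∑ i, w i * (A i.succ k : ℂ))) w
        (Pi.single j 1)) (fun i' => -ω i') (Pi.single i 1))
      = Matrix.of fun i j : Fin n =>
          ∑ k, (A i.succ k : ℂ) * (A j.succ k : ℂ) * (∑ l, (B k l : ℂ) * t l) := by
    ext i j
    simp only [Matrix.of_apply]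
    refine (deriv2
      (fun k => Complex.exp (∑ i, ω i * (A i.succ k : ℂ)) * (∑ l, (B k l : ℂ) * t l))
      (fun i k => (A i.succ k : ℂ)) i j (fun i' => -ω i')).trans ?_
    refine Finset.sum_congr rfl fun k _ => ?_
    have hexp : Complex.exp (∑ i', (fun i' => -ω i') i' * (A i'.succ k : ℂ))
        = (Complex.exp (∑ i', ω i' * (A i'.succ k : ℂ)))⁻¹ := by
      rw [← Complex.exp_neg]
      congr 1
      rw [← Finset.sum_neg_distrib]
      exact Finset.sum_congr rfl fun i' _ => by ring
    rw [hexp]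
    have hne := Complex.exp_ne_zero (∑ i', ω i' * (A i'.succ k : ℂ))
    field_simp
  rw [hmat, hpart1 t]
end

section
/- Let A = (A', α) be a point configuration of codimension m whose last column is α, and suppose the submatrix A' (a configuration of codimension m−1) still has rank 1+n. Let B' be a Gale dual of A' and let B be the Gale dual of A of block form B = [[B', *],[0, 1]] (last row (0,…,0,1)). Then the cuspidal form of A' equals the restriction of the cuspidal form of A to the hyperplane β_α^* = {t : ⟨β_α,t⟩ = 0}: P_{A'}(t_1,…,t_{m−1}) = P_A(t_1,…,t_{m−1},0). -/
open Matrix MvPolynomial Finset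

/-- `detSq` can be computed with any injective column selection whose image lies in `s`. -/
lemma detSq_eq_sq {rho kappa : Type*} [Fintype rho] [Fintype kappa] [DecidableEq kappa]
    (Ahat : Matrix rho kappa ℝ) (s : Finset kappa) (h : s.card = Fintype.card rho)
    (f : Fin (Fintype.card rho) → kappa) (hf : Function.Injective f)
    (hfs : ∀ i, f i ∈ s) :
    detSq Ahat s h = ((Ahat.submatrix (Fintype.equivFin rho).symm f).det) ^ 2 := by
  classical
  let ef : Fin (Fintype.card rho) ≃ {x // x ∈ s} :=
    Equiv.ofBijective (fun i => ⟨f i, hfs i⟩)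
      ((Fintype.bijective_iff_injective_and_card _).2
        ⟨fun a b hab => hf (congrArg Subtype.val hab), by simp [h]⟩)
  let eg : Fin (Fintype.card rho) ≃ {x // x ∈ s} :=
    (finCongr h.symm).trans s.equivFin.symm
  let σ : Equiv.Perm (Fin (Fintype.card rho)) := ef.trans eg.symm
  have hfg : ∀ j, f j = ((eg (σ j) : kappa)) := by
    intro j
    simp [σ, ef]
  have hm : Ahat.submatrix (Fintype.equivFin rho).symm f
      = (Ahat.submatrix (Fintype.equivFin rho).symm
          (fun i => ((s.equivFin.symm (Fin.cast h.symm i)) : kappa))).submatrix id σ := by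
    ext i j
    simp [Matrix.submatrix_apply, hfg j, eg, finCongr]
  rw [detSq, hm, Matrix.det_permute']
  rcases Int.units_eq_one_or (Equiv.Perm.sign σ) with hs | hs <;> rw [hs] <;> push_cast <;> ring

/-- **Restriction of the cuspidal form to a Gale-dual hyperplane.**
Let `A = (A', α)` be a point configuration of codimension `m+1` whose first `N-1`
columns form a configuration `A'` of codimension `m` which still has rank `1+n`.  Let
`B'` be a Gale dual of `A'` and let `B` be a Gale dual of `A` of block form
`[[B', *],[0, 1]]`.  Then `P_{A'}(t₁,…,t_m) = P_A(t₁,…,t_m,0)`. -/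
theorem cuspForm_restrict {n m : ℕ}
    (A : Matrix (Fin (n + 1)) (Fin (n + 1 + (m + 1))) ℝ)
    (A' : Matrix (Fin (n + 1)) (Fin (n + 1 + m)) ℝ)
    (hA1 : ∀ k, A 0 k = 1) (hArank : A.rank = n + 1) (hA'rank : A'.rank = n + 1)
    (hcols : ∀ i (k : Fin (n + 1 + m)), A i k.castSucc = A' i k)
    (B : Matrix (Fin (n + 1 + (m + 1))) (Fin (m + 1)) ℝ)
    (B' : Matrix (Fin (n + 1 + m)) (Fin m) ℝ)
    (hGale : IsGaleDual A B) (hGale' : IsGaleDual A' B')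
    (hblock : ∀ (k : Fin (n + 1 + m)) (l : Fin m), B k.castSucc l.castSucc = B' k l)
    (hlast0 : ∀ l : Fin m, B (Fin.last (n + 1 + m)) l.castSucc = 0)
    (hlast1 : B (Fin.last (n + 1 + m)) (Fin.last m) = 1) :
    ∀ t : Fin m → ℝ,
      MvPolynomial.eval t (cuspFormPoly (A'.submatrix Fin.succ id) B') =
        MvPolynomial.eval (Fin.snoc t 0) (cuspFormPoly (A.submatrix Fin.succ id) B) := by
  intro t
  classical
  have hfac : ∀ k : Fin (n + 1 + m),
      (∑ l, B k.castSucc l * (Fin.snoc t 0 : Fin (m + 1) → ℝ) l) = ∑ l, B' k l * t l := by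
    intro k
    rw [Fin.sum_univ_castSucc]
    simp [hblock]
  have hlastfac : (∑ l, B (Fin.last (n + 1 + m)) l * (Fin.snoc t 0 : Fin (m + 1) → ℝ) l) = 0 := by
    rw [Fin.sum_univ_castSucc]
    simp [hlast0]
  set P1 := (univ : Finset (Fin (n + 1 + m))).powersetCard (Fintype.card (Fin n)) with hP1
  set P2 := (univ : Finset (Fin (n + 1 + (m + 1)))).powersetCard (Fintype.card (Fin n)) with hP2
  set F : Finset (Fin (n + 1 + m)) → ℝ := fun s =>
    if hs : s ∈ P1 then
      detSq (A'.submatrix Fin.succ id) s (mem_powersetCard.mp hs).2 *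
        ∏ k ∈ s, ∑ l, B' k l * t l
    else 0 with hF
  set G : Finset (Fin (n + 1 + (m + 1))) → ℝ := fun s =>
    if hs : s ∈ P2 then
      detSq (A.submatrix Fin.succ id) s (mem_powersetCard.mp hs).2 *
        ∏ k ∈ s, ∑ l, B k l * (Fin.snoc t 0 : Fin (m + 1) → ℝ) l
    else 0 with hG
  have hlhs : MvPolynomial.eval t (cuspFormPoly (A'.submatrix Fin.succ id) B')
      = ∑ s ∈ P1, F s := by
    rw [cuspFormPoly, map_sum, ← Finset.sum_attach P1 F]
    refine Finset.sum_congr rfl fun x _ => ?_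
    simp only [hF]
    rw [dif_pos (show ↑x ∈ P1 from x.2)]
    simp [eval_mul, eval_C, map_prod, map_sum, eval_X]
  have hrhs : MvPolynomial.eval (Fin.snoc t 0) (cuspFormPoly (A.submatrix Fin.succ id) B)
      = ∑ s ∈ P2, G s := by
    rw [cuspFormPoly, map_sum, ← Finset.sum_attach P2 G]
    refine Finset.sum_congr rfl fun x _ => ?_
    simp only [hG]
    rw [dif_pos (show ↑x ∈ P2 from x.2)]
    simp [eval_mul, eval_C, map_prod, map_sum, eval_X]
  rw [hlhs, hrhs]
  rw [← Finset.sum_filter_add_sum_filter_not P2 (fun s => Fin.last (n + 1 + m) ∈ s) G]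
  have hz : ∑ s ∈ P2.filter (fun s => Fin.last (n + 1 + m) ∈ s), G s = 0 := by
    refine Finset.sum_eq_zero fun s hs => ?_
    rcases Finset.mem_filter.mp hs with ⟨hs1, hs2⟩
    simp only [hG]
    rw [dif_pos hs1]
    exact mul_eq_zero_of_right _
      (Finset.prod_eq_zero (f := fun k => ∑ l, B k l * (Fin.snoc t 0 : Fin (m + 1) → ℝ) l)
        hs2 hlastfac)
  rw [hz, zero_add]
  -- bijection between P1 and the filtered P2
  refine Finset.sum_nbij' (fun s => s.map Fin.castSuccEmb)
    (fun s => s.preimage Fin.castSucc (Fin.castSucc_injective _).injOn) ?_ ?_ ?_ ?_ ?_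
  · intro s hs
    rw [Finset.mem_filter]
    constructor
    · rw [hP2, Finset.mem_powersetCard]
      refine ⟨Finset.subset_univ _, ?_⟩
      rw [Finset.card_map]
      exact (Finset.mem_powersetCard.mp hs).2
    · intro hcon
      obtain ⟨k, -, hk⟩ := Finset.mem_map.mp hcon
      exact (Fin.castSucc_lt_last k).ne (by simpa using hk)
  · intro s hs
    rcases Finset.mem_filter.mp hs with ⟨hs1, hs2⟩
    have hmap : (s.preimage Fin.castSucc (Fin.castSucc_injective _).injOn).map Fin.castSuccEmb = s := by
      ext k
      simp only [Finset.mem_map, Finset.mem_preimage]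
      constructor
      · rintro ⟨a, ha, rfl⟩; exact ha
      · intro hk
        have hne : k ≠ Fin.last (n + 1 + m) := fun h => hs2 (h ▸ hk)
        obtain ⟨a, rfl⟩ := Fin.exists_castSucc_eq.mpr hne
        exact ⟨a, hk, rfl⟩
    rw [hP1, Finset.mem_powersetCard]
    refine ⟨Finset.subset_univ _, ?_⟩
    have := (Finset.mem_powersetCard.mp hs1).2
    rw [← hmap, Finset.card_map] at this
    exact this
  · intro s hs
    ext k
    simp only [Finset.mem_preimage, Finset.mem_map]
    constructor
    · rintro ⟨a, ha, hak⟩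
      cases Fin.castSucc_injective _ (show a.castSucc = k.castSucc from hak)
      exact ha
    · intro hk; exact ⟨k, hk, rfl⟩
  · intro s hs
    rcases Finset.mem_filter.mp hs with ⟨hs1, hs2⟩
    ext k
    simp only [Finset.mem_map, Finset.mem_preimage]
    constructor
    · rintro ⟨a, ha, rfl⟩; exact ha
    · intro hk
      have hne : k ≠ Fin.last (n + 1 + m) := fun h => hs2 (h ▸ hk)
      obtain ⟨a, rfl⟩ := Fin.exists_castSucc_eq.mpr hne
      exact ⟨a, hk, rfl⟩
  · intro s hs
    have hs' : s.map Fin.castSuccEmb ∈ P2 := by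
      rw [hP2, Finset.mem_powersetCard]
      exact ⟨Finset.subset_univ _, by rw [Finset.card_map]; exact (Finset.mem_powersetCard.mp hs).2⟩
    simp only [hF, hG]
    rw [dif_pos hs, dif_pos hs']
    have h1 : s.card = Fintype.card (Fin n) := (Finset.mem_powersetCard.mp hs).2
    congr 1
    · -- detSq equality
      rw [detSq_eq_sq (A.submatrix Fin.succ id) (s.map Fin.castSuccEmb)
            (Finset.mem_powersetCard.mp hs').2
            (fun i => Fin.castSucc ((s.equivFin.symm (Fin.cast h1.symm i) : Fin (n + 1 + m))))
            (by
              intro a b hab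
              exact (finCongr h1.symm).injective
                (s.equivFin.symm.injective (Subtype.val_injective (Fin.castSucc_injective _ hab))))
            (by
              intro i
              rw [Finset.mem_map]
              exact ⟨_, (s.equivFin.symm (Fin.cast h1.symm i)).2, rfl⟩)]
      rw [detSq]
      refine congrArg (fun M : Matrix (Fin (Fintype.card (Fin n))) (Fin (Fintype.card (Fin n))) ℝ => M.det ^ 2) ?_
      ext i j
      simp only [Matrix.submatrix_apply, id_eq]
      exact (hcols _ _).symm
    · rw [Finset.prod_map]
      refine Finset.prod_congr rfl fun k _ => ?_
      exact (hfac k).symm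
end

section
/- Let A be a point configuration and let A' be a configuration obtained from A by deleting some of its columns, such that A' still has rank 1+n. If the cuspidal form P_{A'} is not the zero polynomial, then the cuspidal form P_A is not the zero polynomial. -/
open Matrix MvPolynomial Finset

lemma exists_perm_comp {n : ℕ} {κ : Type*} {f g : Fin n → κ}
    (hf : Function.Injective f) (hfg : ∀ i, ∃ j, g j = f i) :
    ∃ π : Equiv.Perm (Fin n), ∀ i, f i = g (π i) := by
  choose F hF using hfg
  have hFinj : Function.Injective F := fun i j hij => hf (by rw [← hF i, ← hF j, hij])
  exact ⟨Equiv.ofBijective F (Finite.injective_iff_bijective.mp hFinj),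
    fun i => (hF i).symm⟩

lemma detSq_eq_s7 {rho kappa : Type*} [Fintype rho] [Fintype kappa] [DecidableEq kappa]
    (Ahat : Matrix rho kappa ℝ) (s : Finset kappa) (h : s.card = Fintype.card rho)
    (f : Fin (Fintype.card rho) → kappa) (hf : Function.Injective f) (hmem : ∀ i, f i ∈ s) :
    detSq Ahat s h = (Ahat.submatrix (Fintype.equivFin rho).symm f).det ^ 2 := by
  set g : Fin (Fintype.card rho) → kappa :=
    fun i => ((s.equivFin.symm (Fin.cast h.symm i)) : kappa) with hg
  have hginj : Function.Injective g := by
    intro i j hij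
    have h2 := s.equivFin.symm.injective (Subtype.ext hij)
    simpa using congrArg (Fin.cast h) h2
  have hsurj : ∀ i, ∃ j, g j = f i := by
    intro i
    exact ⟨Fin.cast h (s.equivFin ⟨f i, hmem i⟩), by simp [hg]⟩
  obtain ⟨π, hπ⟩ := exists_perm_comp hf hsurj
  have heq : Ahat.submatrix (Fintype.equivFin rho).symm f
      = (Ahat.submatrix (Fintype.equivFin rho).symm g).submatrix id ⇑π := by
    ext i j; simp [Matrix.submatrix_apply, hπ j]
  rw [detSq, heq, Matrix.det_permute', mul_pow]
  rcases Int.units_eq_one_or (Equiv.Perm.sign π) with hs | hs <;> simp [hs, hg]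

lemma aeval_linear {m m' : ℕ} (M : Matrix (Fin m) (Fin m') ℝ) (b : Fin m → ℝ) :
    aeval (fun l => ∑ l', C (M l l') * X l' : Fin m → MvPolynomial (Fin m') ℝ)
        (∑ l, C (b l) * X l)
      = ∑ l', C (∑ l, b l * M l l') * X l' := by
  have h1 : ∀ l : Fin m, aeval (fun l => ∑ l', C (M l l') * X l' : Fin m → MvPolynomial (Fin m') ℝ)
      (C (b l) * X l) = ∑ l', C (b l * M l l') * X l' := by
    intro l
    rw [_root_.map_mul, aeval_C, aeval_X, MvPolynomial.algebraMap_eq, Finset.mul_sum]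
    exact Finset.sum_congr rfl fun l' _ => by rw [C_mul]; ring
  rw [map_sum, Finset.sum_congr rfl (fun l _ => h1 l), Finset.sum_comm]
  refine Finset.sum_congr rfl fun l' _ => ?_
  rw [map_sum, Finset.sum_mul]

/-- **Nontriviality of the cuspidal form passes from subconfigurations.**
If `A'` is obtained from the point configuration `A` by deleting some columns, and `A'`
still has rank `1+n`, then nontriviality of `P_{A'}` implies nontriviality of `P_A`. -/
theorem cuspForm_nontrivial_of_sub {n m m' : ℕ}
    (A : Matrix (Fin (n + 1)) (Fin (n + 1 + m)) ℝ)
    (hA1 : ∀ k, A 0 k = 1) (hArank : A.rank = n + 1)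
    (S : Finset (Fin (n + 1 + m))) (hS : S.card = n + 1 + m')
    (hA'rank : (A.submatrix id (S.orderEmbOfFin hS)).rank = n + 1)
    (B : Matrix (Fin (n + 1 + m)) (Fin m) ℝ) (hGale : IsGaleDual A B)
    (B' : Matrix (Fin (n + 1 + m')) (Fin m') ℝ)
    (hGale' : IsGaleDual (A.submatrix id (S.orderEmbOfFin hS)) B')
    (hne : cuspFormPoly ((A.submatrix id (S.orderEmbOfFin hS)).submatrix Fin.succ id) B' ≠ 0) :
    cuspFormPoly (A.submatrix Fin.succ id) B ≠ 0 := by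

  classical
  set e := S.orderEmbOfFin hS with he
  set E : Matrix (Fin (n+1+m)) (Fin (n+1+m')) ℝ :=
    Matrix.of fun k k' => if e k' = k then (1:ℝ) else 0 with hE
  have hAE : A * E = A.submatrix id ⇑e := by
    ext i k'
    simp [Matrix.mul_apply, hE, mul_ite, mul_one, mul_zero]
  have hAEB' : A * (E * B') = 0 := by
    rw [← Matrix.mul_assoc, hAE]
    exact hGale'.2
  have hrange : LinearMap.range B.mulVecLin = LinearMap.ker A.mulVecLin := by
    apply Submodule.eq_of_le_of_finrank_eq
    · rintro x ⟨v, rfl⟩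
      simp only [LinearMap.mem_ker, Matrix.mulVecLin_apply, Matrix.mulVec_mulVec, hGale.2]
      simp
    · have h1 : Module.finrank ℝ (LinearMap.range B.mulVecLin) = m := by
        simpa [Matrix.rank, Fintype.card_fin] using hGale.1
      have h3 : Module.finrank ℝ (LinearMap.range A.mulVecLin) = n + 1 := hArank
      have h2 := LinearMap.finrank_range_add_finrank_ker A.mulVecLin
      rw [Module.finrank_fin_fun, h3] at h2
      rw [h1]; omega
  have hcols : ∀ l', ∃ v : Fin m → ℝ, B.mulVec v = fun k => (E * B') k l' := by
    intro l'
    have hmem : (fun k => (E * B') k l') ∈ LinearMap.ker A.mulVecLin := by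
      rw [LinearMap.mem_ker]
      funext i
      have h0 := congrFun (congrFun hAEB' i) l'
      simpa [Matrix.mulVecLin_apply, Matrix.mulVec, dotProduct,
        Matrix.mul_apply] using h0
    rw [← hrange] at hmem
    exact hmem
  choose Mv hMv using hcols
  set M : Matrix (Fin m) (Fin m') ℝ := Matrix.of fun l l' => Mv l' l with hM
  have hBM : B * M = E * B' := by
    ext k l'
    have h0 := congrFun (hMv l') k
    simpa [Matrix.mul_apply, Matrix.mulVec, dotProduct, hM] using h0
  have hEB'mem : ∀ (k' : Fin (n+1+m')) l', (E * B') (e k') l' = B' k' l' := by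
    intro k' l'
    simp only [Matrix.mul_apply, hE, Matrix.of_apply, ite_mul, one_mul, zero_mul,
      e.injective.eq_iff]
    simp
  have hEB'not : ∀ k ∉ S, ∀ l', (E * B') k l' = 0 := by
    intro k hk l'
    rw [Matrix.mul_apply]
    apply Finset.sum_eq_zero
    intro k'' _
    have hne' : e k'' ≠ k := fun hcon => hk (hcon ▸ Finset.orderEmbOfFin_mem S hS k'')
    simp [hE, hne']
  set φ : MvPolynomial (Fin m) ℝ →ₐ[ℝ] MvPolynomial (Fin m') ℝ :=
    aeval (fun l => ∑ l', C (M l l') * X l') with hφ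
  have key : φ (cuspFormPoly (A.submatrix Fin.succ id) B)
      = cuspFormPoly ((A.submatrix id ⇑e).submatrix Fin.succ id) B' := by
    rw [cuspFormPoly, map_sum]
    have hterm : ∀ σ ∈ (univ.powersetCard (Fintype.card (Fin n))).attach,
        φ (C (detSq (A.submatrix Fin.succ id) σ.1 (mem_powersetCard.mp σ.2).2) *
            ∏ k ∈ σ.1, ∑ l, C (B k l) * X l)
          = C (detSq (A.submatrix Fin.succ id) σ.1 (mem_powersetCard.mp σ.2).2) *
            ∏ k ∈ σ.1, ∑ l', C ((E * B') k l') * X l' := by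
      intro σ _
      rw [_root_.map_mul, map_prod]
      congr 1
      · simp [hφ, MvPolynomial.algebraMap_eq]
      · refine Finset.prod_congr rfl fun k _ => ?_
        rw [hφ]
        rw [aeval_linear M (fun l => B k l)]
        refine Finset.sum_congr rfl fun l' _ => ?_
        rw [show (∑ l, B k l * M l l') = (B * M) k l' from rfl, hBM]
    rw [Finset.sum_congr rfl hterm]
    rw [← Finset.sum_subset
      (Finset.filter_subset (fun σ => σ.1 ⊆ S) (univ.powersetCard (Fintype.card (Fin n))).attach)
      (by
        intro σ _ hσn
        rw [Finset.mem_filter] at hσn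
        push_neg at hσn
        obtain ⟨k, hk, hkS⟩ := Finset.not_subset.mp (hσn (Finset.mem_attach _ _))
        rw [Finset.prod_eq_zero hk (by
          apply Finset.sum_eq_zero
          intro l' _
          rw [hEB'not k hkS l', map_zero, zero_mul]), mul_zero])]
    rw [cuspFormPoly]
    refine (Finset.sum_bij
      (i := fun (σ' : {x // x ∈ (univ : Finset (Fin (n+1+m'))).powersetCard (Fintype.card (Fin n))}) _ =>
        (⟨σ'.1.map e.toEmbedding, by
          rw [Finset.mem_powersetCard]
          exact ⟨Finset.subset_univ _,
            (Finset.card_map _).trans (Finset.mem_powersetCard.mp σ'.2).2⟩⟩ :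
          {x // x ∈ (univ : Finset (Fin (n+1+m))).powersetCard (Fintype.card (Fin n))})) ?_ ?_ ?_ ?_).symm
    · intro σ' _
      rw [Finset.mem_filter]
      refine ⟨Finset.mem_attach _ _, ?_⟩
      intro k hk
      obtain ⟨k', _, rfl⟩ := Finset.mem_map.mp hk
      exact Finset.orderEmbOfFin_mem S hS k'
    · intro σ' _ τ' _ hij
      have := congrArg Subtype.val hij
      exact Subtype.ext (Finset.map_injective e.toEmbedding this)
    · rintro ⟨σ, hσT⟩ hσf
      have hsub : σ ⊆ S := (Finset.mem_filter.mp hσf).2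
      have hinj : Set.InjOn ⇑e (⇑e ⁻¹' ↑σ) := e.injective.injOn
      have hmapeq : (σ.preimage ⇑e hinj).map e.toEmbedding = σ := by
        rw [Finset.map_eq_image]
        simp only [RelEmbedding.coe_toEmbedding]
        rw [Finset.image_preimage]
        apply Finset.filter_true_of_mem
        intro x hx
        rw [Finset.range_orderEmbOfFin]
        exact hsub hx
      refine ⟨⟨σ.preimage ⇑e hinj, ?_⟩, Finset.mem_attach _ _, Subtype.ext hmapeq⟩
      rw [Finset.mem_powersetCard]
      refine ⟨Finset.subset_univ _, ?_⟩
      have := congrArg Finset.card hmapeq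
      rw [Finset.card_map] at this
      rw [this]
      exact (Finset.mem_powersetCard.mp hσT).2
    · intro σ' _
      congr 1
      · congr 1
        set g0 : Fin (Fintype.card (Fin n)) → Fin (n+1+m') :=
          fun i => ((σ'.1.equivFin.symm (Fin.cast (Finset.mem_powersetCard.mp σ'.2).2.symm i)) :
            Fin (n+1+m')) with hg0
        have hg0inj : Function.Injective g0 := by
          intro i j hij
          have h2 := σ'.1.equivFin.symm.injective (Subtype.ext hij)
          simpa using congrArg (Fin.cast (Finset.mem_powersetCard.mp σ'.2).2) h2
        have h1 : detSq ((A.submatrix id ⇑e).submatrix Fin.succ id) σ'.1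
            (Finset.mem_powersetCard.mp σ'.2).2
            = (((A.submatrix id ⇑e).submatrix Fin.succ id).submatrix
                (Fintype.equivFin (Fin n)).symm g0).det ^ 2 := rfl
        rw [h1]
        rw [detSq_eq_s7 (A.submatrix Fin.succ id) (σ'.1.map e.toEmbedding) _
          (⇑e ∘ g0) (e.injective.comp hg0inj)
          (fun i => Finset.mem_map_of_mem _ (Finset.coe_mem _))]
        congr 1
      · rw [Finset.prod_map]
        simp only [RelEmbedding.coe_toEmbedding]
        refine Finset.prod_congr rfl fun k' _ => ?_
        refine Finset.sum_congr rfl fun l' _ => ?_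
        rw [hEB'mem k' l']
  intro h0
  apply hne
  rw [← key, h0, map_zero]
end

section
/- Let A be a point configuration with Gale dual B, let α be a column of A with corresponding Gale-dual row β_α, and suppose the configuration A∖{α} obtained by deleting this column still has rank 1+n. If the cuspidal form P_{A∖{α}} is the zero polynomial, then the linear form ⟨β_α, t⟩ divides the cuspidal form P_A(t). -/
open Matrix MvPolynomial Finset

lemma eval_aeval' {mu nu : Type*} (y : mu → ℝ) (g : nu → MvPolynomial mu ℝ)
    (Q : MvPolynomial nu ℝ) :
    eval y (aeval g Q) = eval (fun i => eval y (g i)) Q := by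
  have h1 : aeval g Q = bind₁ g Q := rfl
  rw [h1]
  exact eval₂Hom_bind₁ (RingHom.id ℝ) y g Q

lemma X_dvd_of_eval_zero {mu : Type*} [Fintype mu] [DecidableEq mu] (l₀ : mu)
    (Q : MvPolynomial mu ℝ) (h : ∀ y : mu → ℝ, y l₀ = 0 → eval y Q = 0) :
    (X l₀ : MvPolynomial mu ℝ) ∣ Q := by
  set φ : MvPolynomial mu ℝ →ₐ[ℝ] MvPolynomial mu ℝ :=
    aeval (Function.update X l₀ (0 : MvPolynomial mu ℝ)) with hφ
  have key : ∀ p : MvPolynomial mu ℝ, (X l₀ : MvPolynomial mu ℝ) ∣ p - φ p := by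
    intro p
    induction p using MvPolynomial.induction_on with
    | C a => simp [hφ]
    | add p q hp hq =>
        have he : p + q - φ (p + q) = (p - φ p) + (q - φ q) := by rw [map_add]; ring
        rw [he]; exact dvd_add hp hq
    | mul_X p i hp =>
        have he : p * X i - φ (p * X i) = (p - φ p) * X i + φ p * (X i - φ (X i)) := by
          rw [_root_.map_mul]; ring
        rw [he]
        refine dvd_add (Dvd.dvd.mul_right hp _) (Dvd.dvd.mul_left ?_ _)
        by_cases hi : i = l₀
        · subst hi; simp [hφ]
        · simp [hφ, Function.update_of_ne hi]
  have hφQ : φ Q = 0 := by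
    apply MvPolynomial.funext (q := 0)
    intro y
    have hfun : (fun i => eval y (Function.update X l₀ 0 i)) = Function.update y l₀ 0 := by
      funext i
      by_cases hi : i = l₀
      · subst hi; simp
      · simp [Function.update_of_ne hi]
    have he : eval y (φ Q) = eval (Function.update y l₀ 0) Q := by
      rw [hφ, eval_aeval', hfun]
    rw [he, h _ (Function.update_self _ _ _)]
    simp
  have h2 := key Q
  rwa [hφQ, sub_zero] at h2

lemma linearForm_dvd_of_eval_zero {mu : Type*} [Fintype mu] [DecidableEq mu]
    (b : mu → ℝ) (P : MvPolynomial mu ℝ)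
    (h : ∀ x : mu → ℝ, (∑ l, b l * x l) = 0 → eval x P = 0) :
    (∑ l, C (b l) * X l : MvPolynomial mu ℝ) ∣ P := by
  by_cases hb : ∀ l, b l = 0
  · have hL : (∑ l, C (b l) * X l : MvPolynomial mu ℝ) = 0 := by
      simp [hb]
    have hP : P = 0 := by
      apply MvPolynomial.funext (q := 0)
      intro x
      rw [h x (by simp [hb])]; simp
    rw [hL, hP]
  · push_neg at hb
    obtain ⟨l₀, hl₀⟩ := hb
    set S : MvPolynomial mu ℝ := ∑ l ∈ univ.erase l₀, C (b l) * X l with hS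
    set ψ : MvPolynomial mu ℝ →ₐ[ℝ] MvPolynomial mu ℝ :=
      aeval (fun l => if l = l₀ then C (b l₀)⁻¹ * (X l₀ - S) else X l) with hψ
    set ψ' : MvPolynomial mu ℝ →ₐ[ℝ] MvPolynomial mu ℝ :=
      aeval (fun l => if l = l₀ then C (b l₀) * X l₀ + S else X l) with hψ'
    have hSψ' : ψ' S = S := by
      rw [hS, map_sum]
      refine Finset.sum_congr rfl fun l hl => ?_
      simp [hψ', if_neg (Finset.ne_of_mem_erase hl), algebraMap_eq]
    have hinv : ∀ p, ψ' (ψ p) = p := by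
      intro p
      have : ψ'.comp ψ = AlgHom.id ℝ (MvPolynomial mu ℝ) := by
        apply MvPolynomial.algHom_ext
        intro i
        by_cases hi : i = l₀
        · simp only [AlgHom.coe_comp, Function.comp_apply, AlgHom.coe_id, id_eq]
          rw [hi]
          rw [show ψ (X l₀) = C (b l₀)⁻¹ * (X l₀ - S) from by rw [hψ, aeval_X, if_pos rfl]]
          rw [_root_.map_mul, map_sub, hSψ']
          rw [show (ψ' : MvPolynomial mu ℝ →ₐ[ℝ] MvPolynomial mu ℝ) (C (b l₀)⁻¹) = C (b l₀)⁻¹ from by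
            rw [hψ']; exact aeval_C _ _]
          rw [show (ψ' : MvPolynomial mu ℝ →ₐ[ℝ] MvPolynomial mu ℝ) (X l₀) = C (b l₀) * X l₀ + S from by
            rw [hψ', aeval_X, if_pos rfl]]
          rw [add_sub_cancel_right, ← mul_assoc, ← C_mul, inv_mul_cancel₀ hl₀, C_1, one_mul]
        · simp [hψ, hψ', aeval_X, if_neg hi]
      calc ψ' (ψ p) = (ψ'.comp ψ) p := rfl
        _ = p := by rw [this]; rfl
    have hψ'X : ψ' (X l₀) = ∑ l, C (b l) * X l := by
      rw [hψ']
      rw [aeval_X, if_pos rfl, hS]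
      rw [← Finset.add_sum_erase _ _ (Finset.mem_univ l₀)]
    have hdvd : (X l₀ : MvPolynomial mu ℝ) ∣ ψ P := by
      apply X_dvd_of_eval_zero
      intro y hy
      rw [hψ, eval_aeval']
      apply h
      have hSx : ∀ y : mu → ℝ, eval y S = ∑ l ∈ univ.erase l₀, b l * y l := by
        intro y; rw [hS]; simp
      rw [← Finset.add_sum_erase _ (fun l => b l * _) (Finset.mem_univ l₀), if_pos rfl]
      rw [show (eval y) (C (b l₀)⁻¹ * (X l₀ - S)) = (b l₀)⁻¹ * (y l₀ - eval y S) by simp]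
      rw [hy, hSx]
      have : ∀ l ∈ univ.erase l₀,
          b l * eval y (if l = l₀ then C (b l₀)⁻¹ * (X l₀ - S) else X l) = b l * y l := by
        intro l hl
        rw [if_neg (Finset.ne_of_mem_erase hl)]
        simp
      rw [Finset.sum_congr rfl this]
      field_simp
      ring
    obtain ⟨Q, hQ⟩ := hdvd
    refine ⟨ψ' Q, ?_⟩
    calc P = ψ' (ψ P) := (hinv P).symm
      _ = ψ' (X l₀ * Q) := by rw [hQ]
      _ = ψ' (X l₀) * ψ' Q := _root_.map_mul _ _ _
      _ = _ := by rw [hψ'X]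

lemma sq_det_submatrix_eq {r : ℕ} {ρ κ : Type*} (M : Matrix ρ κ ℝ) (re : Fin r → ρ)
    (f g : Fin r → κ) (hf : Function.Injective f) (hg : Function.Injective g)
    (hr : Set.range f = Set.range g) :
    (M.submatrix re f).det ^ 2 = (M.submatrix re g).det ^ 2 := by
  let F := Equiv.ofInjective f hf
  let G := Equiv.ofInjective g hg
  let π : Fin r ≃ Fin r := (F.trans (Equiv.setCongr hr)).trans G.symm
  have hgπ : ∀ i, g (π i) = f i := by
    intro i
    have h1 : G (π i) = Equiv.setCongr hr (F i) := by
      simp [π]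
    have h2 : (G (π i) : κ) = g (π i) := rfl
    have h3 : ((Equiv.setCongr hr (F i) : Set.range g) : κ) = (F i : κ) := rfl
    have h4 : (F i : κ) = f i := rfl
    rw [← h2, h1, h3, h4]
  have hsub : M.submatrix re f = (M.submatrix re g).submatrix id π := by
    ext i j
    simp [hgπ]
  rw [hsub, Matrix.det_permute' π]
  rcases Int.units_eq_one_or (Equiv.Perm.sign π) with h | h <;>
    simp [h, mul_pow]

lemma range_coe_equivFin {κ : Type*} (s : Finset κ) {r : ℕ} (h : s.card = r) :
    Set.range (fun i : Fin r => ((s.equivFin.symm (Fin.cast h.symm i)) : κ)) = ↑s := by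
  ext x
  constructor
  · rintro ⟨i, rfl⟩
    exact Finset.coe_mem _
  · intro hx
    exact ⟨Fin.cast h (s.equivFin ⟨x, hx⟩), by simp⟩

lemma detSq_map {n' : ℕ} {κ κ' : Type*} [Fintype κ] [Fintype κ'] [DecidableEq κ] [DecidableEq κ']
    (M : Matrix (Fin n') κ ℝ) (e : κ' ↪ κ) (s : Finset κ')
    (h1 : s.card = Fintype.card (Fin n')) (h2 : (s.map e).card = Fintype.card (Fin n')) :
    detSq (M.submatrix id ⇑e) s h1 = detSq M (s.map e) h2 := by
  unfold detSq
  rw [Matrix.submatrix_submatrix]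
  apply sq_det_submatrix_eq
  · intro i j hij
    apply Fin.cast_injective h1.symm
    apply s.equivFin.symm.injective
    apply Subtype.coe_injective
    exact e.injective hij
  · intro i j hij
    apply Fin.cast_injective h2.symm
    apply (s.map e).equivFin.symm.injective
    exact Subtype.coe_injective hij
  · have hL : Set.range (fun i : Fin (Fintype.card (Fin n')) =>
        (⇑e ∘ fun i => ((s.equivFin.symm (Fin.cast h1.symm i)) : κ')) i) = ⇑e '' ↑s := by
      rw [Set.range_comp]
      rw [range_coe_equivFin s (by simpa using h1)]
    rw [hL, range_coe_equivFin (s.map e) (by simpa using h2), Finset.coe_map]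

lemma exists_mulVec_eq {p q r : ℕ} (M : Matrix (Fin p) (Fin q) ℝ)
    (Bm : Matrix (Fin q) (Fin r) ℝ) (hMB : M * Bm = 0) (hB : Bm.rank = r)
    (hq : M.rank + r = q) (y : Fin q → ℝ) (hy : M.mulVec y = 0) :
    ∃ c, Bm.mulVec c = y := by
  have hle : LinearMap.range Bm.mulVecLin ≤ LinearMap.ker M.mulVecLin := by
    rintro _ ⟨v, rfl⟩
    simp only [LinearMap.mem_ker, Matrix.mulVecLin_apply]
    rw [Matrix.mulVec_mulVec, hMB]
    simp
  have hrk : ∀ (a b : ℕ) (N : Matrix (Fin a) (Fin b) ℝ),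
      N.rank = Module.finrank ℝ (LinearMap.range N.mulVecLin) := fun _ _ _ => rfl
  have h1 : Module.finrank ℝ (LinearMap.ker M.mulVecLin) = r := by
    have h := LinearMap.finrank_range_add_finrank_ker M.mulVecLin
    rw [Module.finrank_pi] at h
    rw [← hrk] at h
    simp only [Fintype.card_fin] at h
    omega
  have h2 : Module.finrank ℝ (LinearMap.range Bm.mulVecLin) = r := by
    rw [← hrk]; exact hB
  have heq := Submodule.eq_of_le_of_finrank_le hle (by rw [h1, h2])
  have hyk : y ∈ LinearMap.ker M.mulVecLin := by
    simp [LinearMap.mem_ker, Matrix.mulVecLin_apply, hy]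
  rw [← heq] at hyk
  obtain ⟨c, hc⟩ := hyk
  exact ⟨c, hc⟩

lemma eval_cuspFormPoly {rho kappa mu : Type*}
    [Fintype rho] [Fintype kappa] [Fintype mu] [DecidableEq kappa]
    (Ahat : Matrix rho kappa ℝ) (B : Matrix kappa mu ℝ) (x : mu → ℝ) :
    eval x (cuspFormPoly Ahat B) = ∑ s ∈ univ.powersetCard (Fintype.card rho),
      (if h : s.card = Fintype.card rho then
        detSq Ahat s h * ∏ k ∈ s, B.mulVec x k else 0) := by
  unfold cuspFormPoly
  rw [map_sum,
    ← Finset.sum_attach (univ.powersetCard (Fintype.card rho))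
      (fun s => if h : s.card = Fintype.card rho then
        detSq Ahat s h * ∏ k ∈ s, B.mulVec x k else 0)]
  apply Finset.sum_congr rfl
  intro s _
  rw [dif_pos (mem_powersetCard.mp s.2).2, _root_.map_mul, eval_C]
  congr 1
  rw [map_prod]
  apply Finset.prod_congr rfl
  intro k _
  simp [Matrix.mulVec, dotProduct]

/-- **Linear factors of the cuspidal form from dual defective subconfigurations.**
Let `A` be a point configuration with Gale dual `B`, let `α` be the column of `A` with
index `j₀` and `β_α` the corresponding row of `B`, and suppose the configuration
`A ∖ {α}` (delete the column `j₀`) still has rank `1+n`.  If the cuspidal form of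
`A ∖ {α}` is the zero polynomial, then the linear form `⟨β_α, t⟩` divides `P_A(t)`. -/
theorem linearForm_dvd_cuspForm {n m : ℕ}
    (A : Matrix (Fin (n + 1)) (Fin (n + 1 + (m + 1))) ℝ)
    (hA1 : ∀ k, A 0 k = 1) (hArank : A.rank = n + 1)
    (B : Matrix (Fin (n + 1 + (m + 1))) (Fin (m + 1)) ℝ) (hGale : IsGaleDual A B)
    (j₀ : Fin (n + 1 + (m + 1)))
    (hc : ({j₀}ᶜ : Finset (Fin (n + 1 + (m + 1)))).card = n + 1 + m)
    (hA'rank :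
      (A.submatrix id (({j₀}ᶜ : Finset (Fin (n + 1 + (m + 1)))).orderEmbOfFin hc)).rank
        = n + 1)
    (B' : Matrix (Fin (n + 1 + m)) (Fin m) ℝ)
    (hGale' : IsGaleDual
      (A.submatrix id (({j₀}ᶜ : Finset (Fin (n + 1 + (m + 1)))).orderEmbOfFin hc)) B')
    (hP'zero : cuspFormPoly
      ((A.submatrix id
        (({j₀}ᶜ : Finset (Fin (n + 1 + (m + 1)))).orderEmbOfFin hc)).submatrix
          Fin.succ id) B' = 0) :
    (∑ l, C (B j₀ l) * X l) ∣ cuspFormPoly (A.submatrix Fin.succ id) B := by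
  classical
  set e := (({j₀}ᶜ : Finset (Fin (n + 1 + (m + 1)))).orderEmbOfFin hc) with he
  apply linearForm_dvd_of_eval_zero (b := fun l => B j₀ l)
  intro x hx
  have hx0 : B.mulVec x j₀ = 0 := hx
  set y : Fin (n + 1 + m) → ℝ := fun k' => B.mulVec x (e k') with hy
  have hmapuniv : (univ : Finset (Fin (n + 1 + m))).map e.toEmbedding
      = ({j₀}ᶜ : Finset (Fin (n + 1 + (m + 1)))) := by
    apply Finset.eq_of_subset_of_card_le
    · intro k hk
      obtain ⟨k', _, rfl⟩ := Finset.mem_map.mp hk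
      exact Finset.orderEmbOfFin_mem _ hc k'
    · rw [Finset.card_map, hc, card_univ, Fintype.card_fin]
  have hrange : Set.range ⇑e = ↑({j₀}ᶜ : Finset (Fin (n + 1 + (m + 1)))) := by
    rw [he]; exact Finset.range_orderEmbOfFin _ hc
  have hcoe : ⇑e.toEmbedding = ⇑e := rfl
  have hAy : (A.submatrix id ⇑e).mulVec y = 0 := by
    funext i
    show ∑ k', A i (e k') * y k' = 0
    have step1 : ∑ k', A i (e k') * y k'
        = ∑ k ∈ ({j₀}ᶜ : Finset (Fin (n + 1 + (m + 1)))), A i k * B.mulVec x k := by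
      rw [← hmapuniv, Finset.sum_map]
      rfl
    have step2 : ∑ k ∈ ({j₀}ᶜ : Finset (Fin (n + 1 + (m + 1)))), A i k * B.mulVec x k
        = (∑ k, A i k * B.mulVec x k) - A i j₀ * B.mulVec x j₀ := by
      rw [← Finset.sum_compl_add_sum ({j₀} : Finset (Fin (n + 1 + (m + 1))))
        (fun k => A i k * B.mulVec x k)]
      simp
    have step3 : (∑ k, A i k * B.mulVec x k) = 0 := by
      have hAB : A.mulVec (B.mulVec x) i = 0 := by
        rw [Matrix.mulVec_mulVec, hGale.2]; simp
      simpa [Matrix.mulVec, dotProduct] using hAB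
    rw [step1, step2, step3, hx0, mul_zero, sub_zero]
  obtain ⟨c, hcy⟩ := exists_mulVec_eq (A.submatrix id ⇑e) B' hGale'.2
    (by rw [hGale'.1, Fintype.card_fin]) (by rw [hA'rank]) y hAy
  have h0 : eval c (cuspFormPoly ((A.submatrix id ⇑e).submatrix Fin.succ id) B') = 0 := by
    rw [hP'zero]; simp
  rw [eval_cuspFormPoly] at h0
  rw [eval_cuspFormPoly]
  set r := Fintype.card (Fin n) with hr
  set D : Finset (Fin (n + 1 + (m + 1))) → ℝ := fun s =>
    if h : s.card = r then detSq (A.submatrix Fin.succ id) s h * ∏ k ∈ s, B.mulVec x k else 0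
    with hD
  rw [← Finset.sum_filter_add_sum_filter_not (univ.powersetCard r) (fun s => j₀ ∈ s) D]
  have hfirst : ∑ s ∈ (univ.powersetCard r).filter (fun s => j₀ ∈ s), D s = 0 := by
    apply Finset.sum_eq_zero
    intro s hs
    rw [Finset.mem_filter] at hs
    simp only [hD]
    by_cases hcard : s.card = r
    · rw [dif_pos hcard, Finset.prod_eq_zero hs.2 hx0, mul_zero]
    · rw [dif_neg hcard]
  rw [hfirst, zero_add]
  rw [← h0]
  apply Finset.sum_nbij' (i := fun s => s.preimage ⇑e (Set.injOn_of_injective e.injective))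
    (j := fun s' => s'.map e.toEmbedding)
  · -- hi : maps into powersetCard r
    intro s hs
    rw [Finset.mem_filter, Finset.mem_powersetCard] at hs
    obtain ⟨⟨hsub, hcard⟩, hj₀⟩ := hs
    have hsub' : s ⊆ ({j₀}ᶜ : Finset (Fin (n + 1 + (m + 1)))) := by
      intro k hk
      rw [Finset.mem_compl, Finset.mem_singleton]
      rintro rfl; exact hj₀ hk
    have himg : (s.preimage ⇑e (Set.injOn_of_injective e.injective)).map e.toEmbedding = s := by
      rw [Finset.map_eq_image, hcoe]
      rw [Finset.image_preimage]
      apply Finset.filter_true_of_mem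
      intro k hk
      rw [hrange]
      exact hsub' hk
    rw [Finset.mem_powersetCard]
    constructor
    · exact Finset.subset_univ _
    · have := congrArg Finset.card himg
      rw [Finset.card_map] at this
      rw [this, hcard]
  · -- hj
    intro s' hs'
    rw [Finset.mem_powersetCard] at hs'
    rw [Finset.mem_filter, Finset.mem_powersetCard]
    refine ⟨⟨Finset.subset_univ _, by rw [Finset.card_map, hs'.2]⟩, ?_⟩
    intro hj₀
    rw [Finset.mem_map] at hj₀
    obtain ⟨k', _, hk'⟩ := hj₀
    have hk'' : e k' = j₀ := hk'
    have : e k' ∈ ({j₀}ᶜ : Finset (Fin (n + 1 + (m + 1)))) :=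
      Finset.orderEmbOfFin_mem _ hc k'
    rw [hk''] at this
    simp at this
  · -- left_inv
    intro s hs
    rw [Finset.mem_filter, Finset.mem_powersetCard] at hs
    obtain ⟨⟨hsub, hcard⟩, hj₀⟩ := hs
    have hsub' : ∀ k ∈ s, k ∈ Set.range ⇑e := by
      intro k hk
      rw [hrange, Finset.mem_coe, Finset.mem_compl, Finset.mem_singleton]
      rintro rfl; exact hj₀ hk
    rw [Finset.map_eq_image, hcoe, Finset.image_preimage]
    exact Finset.filter_true_of_mem hsub'
  · -- right_inv
    intro s' _
    apply Finset.coe_injective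
    rw [Finset.coe_preimage, Finset.coe_map]
    exact Set.preimage_image_eq _ e.injective
  · -- values
    intro s hs
    rw [Finset.mem_filter, Finset.mem_powersetCard] at hs
    obtain ⟨⟨hsub, hcard⟩, hj₀⟩ := hs
    set s' := s.preimage ⇑e (Set.injOn_of_injective e.injective) with hs'def
    have himg : s'.map e.toEmbedding = s := by
      rw [hs'def, Finset.map_eq_image, hcoe, Finset.image_preimage]
      apply Finset.filter_true_of_mem
      intro k hk
      rw [hrange, Finset.mem_coe, Finset.mem_compl, Finset.mem_singleton]
      rintro rfl; exact hj₀ hk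
    have hcard' : s'.card = r := by
      have := congrArg Finset.card himg
      rw [Finset.card_map] at this
      rw [this, hcard]
    simp only [hD]
    rw [dif_pos hcard, dif_pos hcard']
    have hdet : detSq (A.submatrix Fin.succ id) s hcard
        = detSq ((A.submatrix id ⇑e).submatrix Fin.succ id) s' hcard' := by
      have hsubm : (A.submatrix id ⇑e).submatrix Fin.succ id
          = (A.submatrix Fin.succ id).submatrix id ⇑e := rfl
      rw [hsubm, show ((A.submatrix Fin.succ id).submatrix id ⇑e : Matrix (Fin n) (Fin (n+1+m)) ℝ)
          = (A.submatrix Fin.succ id).submatrix id ⇑e.toEmbedding from rfl,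
        detSq_map (A.submatrix Fin.succ id) e.toEmbedding s' hcard'
        (by rw [himg]; exact hcard)]
      congr 1
      exact himg.symm
    have hprod : ∏ k ∈ s, B.mulVec x k = ∏ k' ∈ s', B'.mulVec c k' := by
      rw [← himg, Finset.prod_map]
      apply Finset.prod_congr rfl
      intro k' _
      rw [hcy]
      rfl
    rw [hdet, hprod]
end

section
/- Let n = 2 and let A be the 3×(3+m) matrix with columns (1,0,0)^T, (1,1,0)^T, (1,0,1)^T, (1,α_{11},α_{12})^T, …, (1,α_{m1},α_{m2})^T, and let B be the (3+m)×m Gale dual whose k-th column is (|α_k|−1, −α_{k1}, −α_{k2}, 0,…,0,1,0,…,0)^T with the 1 in position 3+k, where |α_k| = α_{k1}+α_{k2}. Then the cuspidal form P_A(t) is the quadratic form t^T Q t given by the symmetric m×m matrix Q with entries Q_{kj} = g(α_k, α_j), where g(α,δ) = ½( α_1δ_2(1−α_1−δ_2) + α_2δ_1(1−α_2−δ_1) + (α_1δ_2 − α_2δ_1)² ) for α = (α_1,α_2), δ = (δ_1,δ_2) ∈ ℝ². -/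
open Matrix MvPolynomial Finset

/-- The symmetric kernel `g(α,δ)` of the bivariate cuspidal form. -/
noncomputable def gKer (a d : Fin 2 → ℝ) : ℝ :=
  (a 0 * d 1 * (1 - a 0 - d 1) + a 1 * d 0 * (1 - a 1 - d 0)
    + (a 0 * d 1 - a 1 * d 0) ^ 2) / 2

lemma detSq_pair {κ : Type*} [Fintype κ] [DecidableEq κ] (Ahat : Matrix (Fin 2) κ ℝ)
    {i k : κ} (hik : i ≠ k) (h : ({i, k} : Finset κ).card = Fintype.card (Fin 2)) :
    detSq Ahat {i, k} h = (Ahat 0 i * Ahat 1 k - Ahat 0 k * Ahat 1 i) ^ 2 := by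
  unfold detSq
  erw [Matrix.det_fin_two]
  set e := (Fintype.equivFin (Fin 2)).symm with he
  have htwo : ∀ x : Fin 2, x = 0 ∨ x = 1 := by decide
  have hgmem : ∀ r : Fin 2,
      ((({i, k} : Finset κ).equivFin.symm (Fin.cast h.symm r)) : κ) = i ∨
      ((({i, k} : Finset κ).equivFin.symm (Fin.cast h.symm r)) : κ) = k := by
    intro r
    have hx := (({i, k} : Finset κ).equivFin.symm (Fin.cast h.symm r)).2
    rcases Finset.mem_insert.mp hx with h' | h'
    · exact Or.inl h'
    · exact Or.inr (Finset.mem_singleton.mp h')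
  have hgne : ((({i, k} : Finset κ).equivFin.symm (Fin.cast h.symm 0)) : κ) ≠
      ((({i, k} : Finset κ).equivFin.symm (Fin.cast h.symm 1)) : κ) := by
    intro hc
    have := (({i, k} : Finset κ).equivFin.symm.injective
      (Subtype.ext hc : (({i, k} : Finset κ).equivFin.symm (Fin.cast h.symm 0)) = _))
    simpa using congrArg Fin.val this
  have hene : e 0 ≠ e 1 := by
    intro hc; exact absurd (e.injective hc) (by decide)
  change (Ahat (e 0) ((({i, k} : Finset κ).equivFin.symm (Fin.cast h.symm (0 : Fin 2))) : κ) * Ahat (e 1) ((({i, k} : Finset κ).equivFin.symm (Fin.cast h.symm (1 : Fin 2))) : κ) - Ahat (e 0) ((({i, k} : Finset κ).equivFin.symm (Fin.cast h.symm (1 : Fin 2))) : κ) * Ahat (e 1) ((({i, k} : Finset κ).equivFin.symm (Fin.cast h.symm (0 : Fin 2))) : κ)) ^ 2 = _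
  rcases htwo (e 0) with h0 | h0 <;> rcases htwo (e 1) with h1 | h1 <;>
    rcases hgmem 0 with ha | ha <;> rcases hgmem 1 with hb | hb <;>
    first
      | (exact absurd (h0.trans h1.symm) hene)
      | (exact absurd (ha.trans hb.symm) hgne)
      | (rw [h0, h1, ha, hb]; try ring)

lemma pair_eq_pair_iff' {κ : Type*} [DecidableEq κ] (a b i k : κ) :
    ({a, b} : Finset κ) = {i, k} ↔ (a = i ∧ b = k) ∨ (a = k ∧ b = i) := by
  rw [← Finset.coe_inj]
  simp only [Finset.coe_insert, Finset.coe_singleton]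
  exact Set.pair_eq_pair_iff

lemma sum_powersetCard_two {κ : Type*} [Fintype κ] [DecidableEq κ] (G : κ → κ → ℝ)
    (hsymm : ∀ i k, G i k = G k i) (hdiag : ∀ i, G i i = 0)
    (F : Finset κ → ℝ)
    (hF : ∀ i k, i ≠ k → F {i, k} = G i k) :
    ∑ s ∈ univ.powersetCard 2, F s = (∑ i, ∑ k, G i k) / 2 := by
  have h1 : ∑ i, ∑ k, G i k = ∑ p ∈ (univ ×ˢ univ : Finset (κ × κ)), G p.1 p.2 := by
    rw [Finset.sum_product]
  have h2 : ∑ p ∈ (univ ×ˢ univ : Finset (κ × κ)), G p.1 p.2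
      = ∑ p ∈ (univ ×ˢ univ : Finset (κ × κ)).filter (fun p => ¬ p.1 = p.2), G p.1 p.2 := by
    rw [← Finset.sum_filter_add_sum_filter_not (univ ×ˢ univ) (fun p => p.1 = p.2)]
    have : ∑ p ∈ (univ ×ˢ univ : Finset (κ × κ)).filter (fun p => p.1 = p.2), G p.1 p.2 = 0 := by
      apply Finset.sum_eq_zero
      intro p hp
      have := (Finset.mem_filter.mp hp).2
      rw [← this, hdiag]
    rw [this, zero_add]
  have hmaps : ∀ p ∈ (univ ×ˢ univ : Finset (κ × κ)).filter (fun p => ¬ p.1 = p.2),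
      ({p.1, p.2} : Finset κ) ∈ univ.powersetCard 2 := by
    intro p hp
    have hne := (Finset.mem_filter.mp hp).2
    rw [Finset.mem_powersetCard]
    exact ⟨Finset.subset_univ _, Finset.card_pair hne⟩
  have h3 := Finset.sum_fiberwise_of_maps_to hmaps (fun p : κ × κ => G p.1 p.2)
  have h4 : ∀ s ∈ univ.powersetCard 2,
      (∑ p ∈ (univ ×ˢ univ : Finset (κ × κ)).filter (fun p => ¬ p.1 = p.2)
        |>.filter (fun p => ({p.1, p.2} : Finset κ) = s), G p.1 p.2) = 2 * F s := by
    intro s hs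
    obtain ⟨i, k, hik, rfl⟩ := Finset.card_eq_two.mp (Finset.mem_powersetCard.mp hs).2
    have hset : ((univ ×ˢ univ : Finset (κ × κ)).filter (fun p => ¬ p.1 = p.2)
        |>.filter (fun p => ({p.1, p.2} : Finset κ) = {i, k})) = {(i, k), (k, i)} := by
      ext p
      simp only [Finset.mem_filter, Finset.mem_product, Finset.mem_univ, true_and,
        Finset.mem_insert, Finset.mem_singleton, pair_eq_pair_iff', Prod.ext_iff]
      constructor
      · rintro ⟨hne, h | h⟩
        · exact Or.inl ⟨h.1, h.2⟩
        · exact Or.inr ⟨h.1, h.2⟩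
      · rintro (⟨h1', h2'⟩ | ⟨h1', h2'⟩)
        · subst h1'; subst h2'; exact ⟨hik, Or.inl ⟨rfl, rfl⟩⟩
        · subst h1'; subst h2'; exact ⟨fun h => hik h.symm, Or.inr ⟨rfl, rfl⟩⟩
    rw [hset, Finset.sum_insert (by simp [Prod.ext_iff]; intro h; exact fun _ => hik h),
      Finset.sum_singleton]
    rw [hF i k hik, hsymm k i]
    ring
  rw [h1, h2, ← h3, Finset.sum_congr rfl h4, ← Finset.mul_sum]
  ring

/-- General evaluation of the bivariate cuspidal form as a double sum. -/
lemma cuspForm_eval_two {κ : Type*} [Fintype κ] [DecidableEq κ]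
    {mu : Type*} [Fintype mu]
    (Ahat : Matrix (Fin 2) κ ℝ) (B : Matrix κ mu ℝ) (t : mu → ℝ) :
    MvPolynomial.eval t (cuspFormPoly Ahat B) =
      (∑ i, ∑ k, (Ahat 0 i * Ahat 1 k - Ahat 0 k * Ahat 1 i) ^ 2 *
        ((∑ l, B i l * t l) * (∑ l, B k l * t l))) / 2 := by
  classical
  set f : κ → ℝ := fun i => ∑ l, B i l * t l with hf
  set F : Finset κ → ℝ := fun s =>
    if h : s.card = Fintype.card (Fin 2) then detSq Ahat s h * ∏ k ∈ s, f k else 0 with hF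
  have step1 : MvPolynomial.eval t (cuspFormPoly Ahat B)
      = ∑ s ∈ univ.powersetCard (Fintype.card (Fin 2)), F s := by
    rw [cuspFormPoly, map_sum]
    rw [← Finset.sum_attach (univ.powersetCard (Fintype.card (Fin 2))) F]
    apply Finset.sum_congr rfl
    intro s _
    have hs := (mem_powersetCard.mp s.2).2
    rw [hF]
    simp only [_root_.map_mul, eval_C, map_prod, map_sum, eval_X, dif_pos hs, hf]
  rw [step1]
  exact sum_powersetCard_two
    (fun i k => (Ahat 0 i * Ahat 1 k - Ahat 0 k * Ahat 1 i) ^ 2 * (f i * f k))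
    (fun i k => by ring) (fun i => by ring_nf) F
    (fun i k hik => by
      have h' : ({i, k} : Finset κ).card = Fintype.card (Fin 2) := by
        simp [Finset.card_pair hik]
      rw [hF]
      simp only [dif_pos h']
      rw [detSq_pair Ahat hik h', Finset.prod_pair hik])


/-- **The bivariate cuspidal form as an explicit quadratic form.**
For `n = 2`, the configuration `A` with columns `(1,0,0)ᵀ, (1,1,0)ᵀ, (1,0,1)ᵀ,
(1,α_{k1},α_{k2})ᵀ` and the standard Gale dual `B` whose `k`-th column is
`(|α_k|-1, -α_{k1}, -α_{k2}, e_k)`, the cuspidal form is the quadratic form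
`P_A(t) = Σ_{k,j} g(α_k,α_j) t_k t_j`. -/
theorem cuspForm_bivariate_matrix {m : ℕ} (α : Fin m → Fin 2 → ℝ) :
    ∀ t : Fin m → ℝ,
      MvPolynomial.eval t (cuspFormPoly
        ((Matrix.of fun (i : Fin 3) (k : Fin (3 + m)) =>
          Fin.append ![![1, 0, 0], ![1, 1, 0], ![1, 0, 1]]
            (fun j => ![1, α j 0, α j 1]) k i).submatrix Fin.succ id)
        (Matrix.of fun (k : Fin (3 + m)) (l : Fin m) =>
          Fin.append
            ![fun l' => α l' 0 + α l' 1 - 1, fun l' => -(α l' 0), fun l' => -(α l' 1)]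
            (fun j l' => if j = l' then (1 : ℝ) else 0) k l)) =
      ∑ k, ∑ j, gKer (α k) (α j) * (t k * t j) := by
  intro t
  rw [cuspForm_eval_two]
  simp only [Fin.sum_univ_add, Matrix.submatrix_apply, Matrix.of_apply, id,
    Fin.append_left, Fin.append_right, Fin.sum_univ_three,
    Fin.succ_zero_eq_one, Fin.succ_one_eq_two,
    Matrix.cons_val', Matrix.cons_val_zero, Matrix.cons_val_one, Matrix.head_cons,
    Matrix.cons_val_two, Matrix.tail_cons, Matrix.empty_val', Matrix.cons_val_fin_one,
    Matrix.head_fin_const, ite_mul, one_mul, zero_mul, Finset.sum_ite_eq, Finset.mem_univ,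
    if_true, mul_zero, mul_one, zero_pow, zero_add, add_zero, neg_mul, mul_neg, neg_neg,
    sub_zero, zero_sub, neg_sq, one_pow, even_two, Even.neg_pow]
  simp only [show (0:ℝ)^2 = 0 by norm_num, zero_mul, zero_add, add_zero,
    Finset.sum_const_zero]
  simp only [Finset.sum_add_distrib]
  have h1 : (∑ x, -(α x 0 * t x)) * (∑ x, -(α x 1 * t x))
      = ∑ k, ∑ j, α k 0 * α j 1 * (t k * t j) := by
    rw [Finset.sum_mul_sum]
    exact Finset.sum_congr rfl fun k _ => Finset.sum_congr rfl fun j _ => by ring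
  have h3 : (∑ x, -(α x 1 * t x)) * (∑ x, -(α x 0 * t x))
      = ∑ k, ∑ j, α k 1 * α j 0 * (t k * t j) := by
    rw [Finset.sum_mul_sum]
    exact Finset.sum_congr rfl fun k _ => Finset.sum_congr rfl fun j _ => by ring
  have h2 : (∑ x, α x 1 ^ 2 * ((∑ y, -(α y 0 * t y)) * t x))
      = ∑ k, ∑ j, -(α k 1 ^ 2 * α j 0) * (t k * t j) := by
    refine Finset.sum_congr rfl fun k _ => ?_
    rw [Finset.sum_mul, Finset.mul_sum]
    exact Finset.sum_congr rfl fun j _ => by ring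
  have h4 : (∑ x, α x 0 ^ 2 * ((∑ y, -(α y 1 * t y)) * t x))
      = ∑ k, ∑ j, -(α k 0 ^ 2 * α j 1) * (t k * t j) := by
    refine Finset.sum_congr rfl fun k _ => ?_
    rw [Finset.sum_mul, Finset.mul_sum]
    exact Finset.sum_congr rfl fun j _ => by ring
  have h5 : (∑ x, α x 1 ^ 2 * (t x * ∑ y, -(α y 0 * t y)))
      = ∑ k, ∑ j, -(α k 0 * α j 1 ^ 2) * (t k * t j) := by
    have e1 : (∑ x, α x 1 ^ 2 * (t x * ∑ y, -(α y 0 * t y)))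
        = ∑ x, ∑ y, -(α x 1 ^ 2 * α y 0) * (t x * t y) := by
      simp only [Finset.mul_sum]
      exact Finset.sum_congr rfl fun k _ => Finset.sum_congr rfl fun j _ => by ring
    rw [e1, Finset.sum_comm]
    exact Finset.sum_congr rfl fun k _ => Finset.sum_congr rfl fun j _ => by ring
  have h6 : (∑ x, α x 0 ^ 2 * (t x * ∑ y, -(α y 1 * t y)))
      = ∑ k, ∑ j, -(α k 1 * α j 0 ^ 2) * (t k * t j) := by
    have e1 : (∑ x, α x 0 ^ 2 * (t x * ∑ y, -(α y 1 * t y)))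
        = ∑ x, ∑ y, -(α x 0 ^ 2 * α y 1) * (t x * t y) := by
      simp only [Finset.mul_sum]
      exact Finset.sum_congr rfl fun k _ => Finset.sum_congr rfl fun j _ => by ring
    rw [e1, Finset.sum_comm]
    exact Finset.sum_congr rfl fun k _ => Finset.sum_congr rfl fun j _ => by ring
  rw [h1, h2, h3, h4, h5, h6]
  simp only [← Finset.sum_add_distrib]
  simp only [Finset.sum_div]
  refine Finset.sum_congr rfl fun k _ => Finset.sum_congr rfl fun j _ => ?_
  simp only [gKer]
  ring
end

section
/- Let 0, e_1 = (1,0), e_2 = (0,1), α, δ, ε be six distinct points of ℝ². Then H(α,δ,ε) = 0 if and only if there is a conic containing all six points, i.e., if and only if there exists (a,b,c) ∈ ℝ³ ∖ {(0,0,0)} such that the polynomial P(x) = a x_1² + b x_1x_2 + c x_2² − a x_1 − c x_2 vanishes at α, δ, and ε (it automatically vanishes at 0, e_1, e_2). -/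
/-- The `24`-term polynomial `H` in three points of `ℝ²`. -/
noncomputable def HPoly (a d e : ℝ × ℝ) : ℝ :=
  a.1 * a.2 * d.2 * e.1 * (1 - d.2) * (1 - e.1)
    - a.1 * a.2 * d.1 * e.2 * (1 - d.1) * (1 - e.2)
    + a.2 * d.1 * e.1 * e.2 * (1 - a.2) * (1 - d.1)
    - a.2 * d.1 * d.2 * e.1 * (1 - a.2) * (1 - e.1)
    - a.1 * d.2 * e.1 * e.2 * (1 - a.1) * (1 - d.2)
    + a.1 * d.1 * d.2 * e.2 * (1 - a.1) * (1 - e.2)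

/-- **Six points on a conic and the polynomial `H`.**
Let `0, e₁, e₂, α, δ, ε` be six distinct points of `ℝ²`.  Then `H(α,δ,ε) = 0` if and
only if there is a conic through all six points, i.e. some `(a,b,c) ≠ (0,0,0)` such
that `P(x) = a x₁² + b x₁x₂ + c x₂² - a x₁ - c x₂` vanishes at `α`, `δ` and `ε`
(it automatically vanishes at `0, e₁, e₂`). -/
theorem H_vanishes_iff_conic (α δ ε : ℝ × ℝ)
    (hdist : ([((0 : ℝ), (0 : ℝ)), (1, 0), (0, 1), α, δ, ε] : List (ℝ × ℝ)).Pairwise (· ≠ ·)) :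
    HPoly α δ ε = 0 ↔
      ∃ a b c : ℝ, (a, b, c) ≠ (0, 0, 0) ∧
        a * α.1 ^ 2 + b * α.1 * α.2 + c * α.2 ^ 2 - a * α.1 - c * α.2 = 0 ∧
        a * δ.1 ^ 2 + b * δ.1 * δ.2 + c * δ.2 ^ 2 - a * δ.1 - c * δ.2 = 0 ∧
        a * ε.1 ^ 2 + b * ε.1 * ε.2 + c * ε.2 ^ 2 - a * ε.1 - c * ε.2 = 0 := by

  classical
  set M : Matrix (Fin 3) (Fin 3) ℝ :=
    !![α.1 ^ 2 - α.1, α.1 * α.2, α.2 ^ 2 - α.2;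
       δ.1 ^ 2 - δ.1, δ.1 * δ.2, δ.2 ^ 2 - δ.2;
       ε.1 ^ 2 - ε.1, ε.1 * ε.2, ε.2 ^ 2 - ε.2] with hM
  have hdet : M.det = HPoly α δ ε := by
    simp [hM, Matrix.det_fin_three, HPoly]; ring
  rw [← hdet, ← Matrix.exists_mulVec_eq_zero_iff]
  constructor
  · rintro ⟨v, hv, hMv⟩
    refine ⟨v 0, v 1, v 2, ?_, ?_, ?_, ?_⟩
    · intro h
      apply hv
      have h0 : v 0 = 0 := congrArg Prod.fst h
      have h1 : v 1 = 0 := congrArg Prod.fst (congrArg Prod.snd h)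
      have h2 : v 2 = 0 := congrArg Prod.snd (congrArg Prod.snd h)
      funext i; fin_cases i <;> assumption
    · have := congrFun hMv 0
      simp [hM, Matrix.mulVec, dotProduct, Fin.sum_univ_three] at this
      linarith [this]
    · have := congrFun hMv 1
      simp [hM, Matrix.mulVec, dotProduct, Fin.sum_univ_three] at this
      linarith [this]
    · have := congrFun hMv 2
      simp [hM, Matrix.mulVec, dotProduct, Fin.sum_univ_three] at this
      linarith [this]
  · rintro ⟨a, b, c, habc, h1, h2, h3⟩
    refine ⟨![a, b, c], ?_, ?_⟩
    · intro h
      apply habc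
      have := congrFun h
      simp at this
      exact Prod.ext (this 0) (Prod.ext (this 1) (this 2))
    · funext i
      fin_cases i <;>
        simp [hM, Matrix.mulVec, dotProduct, Fin.sum_univ_three] <;> linarith
end
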